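/- arXiv:1905.02508 — 3 statements merged into one kernel-verified Lean document; each statement's English description precedes it below -/
import Mathlib

section
/- If H̃_j(t) = H_j(t) for all t ∈ 𝒥 and all j = 1,…,d, and Ȟ₀(t) = H₀(t) for all t ∈ 𝒥 (pointwise independence), then P(T̃ > t) = P(T > t)·P(C > t) for all t ∈ 𝒥 and P(T > t, C ≥ t) = P(T > t)·P(C ≥ t) for all t ∈ 𝒥. -/
/-!
The observed pair `(Š(t), S̃(t−)) = (P(T > t, C ≥ t), P(T ≥ t, C ≥ t))` and its independent
counterpart `(S(t) K(t−), S(t−) K(t−))` satisfy the same Volterra equation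
`u(t) + ∫_{(0,t]} v dΛ₁ + ∫_{(0,t)} u dΛ₀ = 1`, with `v` the left limit of `u`. For the observed
pair this is the decomposition of the sample space by the first exit, with `Λ₁ = ∑ⱼ H̃ⱼ` and
`Λ₀ = Ȟ₀`; for the independent one it is the same decomposition under the product law, with
`Λ₁ = ∑ⱼ Hⱼ` and `Λ₀ = H₀`. Pointwise independence identifies these hazards on `𝒥`, so
`|Š − S K(·−)|` satisfies a homogeneous Gronwall inequality and vanishes there. Comparing the atoms
of `Ȟ₀` and `H₀` at `t` then gives `P(T > t, C = t) = S(t) P(C = t)`, which turns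
`Š = S K(·−)` into `S̃ = S K`.
-/

open MeasureTheory Set ENNReal

open Filter Topology

theorem Real.forall_mem_Icc_of_induction {p : ℝ → Prop} {a b : ℝ}
    (hlim : ∀ c ∈ Icc a b, (∀ x ∈ Ico a c, p x) → p c)
    (hstep : ∀ c ∈ Ico a b, (∀ x ∈ Icc a c, p x) → ∃ c' > c, ∀ x ∈ Ioc c c', p x) :
    ∀ x ∈ Icc a b, p x := by
  by_contra! ⟨x₀, hx₀, hpx₀⟩
  set B := {x | x ∈ Icc a b ∧ ¬ p x}
  have hB : B.Nonempty := ⟨x₀, hx₀, hpx₀⟩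
  have hc_le : ∀ x ∈ B, sInf B ≤ x := fun x hx => csInf_le ⟨a, fun y hy => hy.1.1⟩ hx
  have hac : a ≤ sInf B := le_csInf hB fun x hx => hx.1.1
  have hcb : sInf B ≤ b := (hc_le x₀ ⟨hx₀, hpx₀⟩).trans hx₀.2
  have hbelow : ∀ x ∈ Ico a (sInf B), p x := fun x hx =>
    by_contra fun hpx => hx.2.not_ge (hc_le x ⟨⟨hx.1, hx.2.le.trans hcb⟩, hpx⟩)
  have hupto : ∀ x ∈ Icc a (sInf B), p x := fun x hx =>
    hx.2.lt_or_eq.elim (fun h => hbelow x ⟨hx.1, h⟩)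
      (fun h => h ▸ hlim _ ⟨hac, hcb⟩ hbelow)
  rcases hcb.lt_or_eq with hcb | hcb
  · obtain ⟨c', hcc', hc'⟩ := hstep _ ⟨hac, hcb⟩ hupto
    refine hcc'.not_ge (le_csInf hB fun x hx => not_lt.mp fun hxc' => hx.2 ?_)
    rcases le_or_gt x (sInf B) with hxc | hxc
    · exact hupto x ⟨hx.1.1, hxc⟩
    · exact hc' x ⟨hxc, hxc'.le⟩
  · exact hpx₀ (hupto x₀ ⟨hx₀.1, hcb ▸ hx₀.2⟩)

lemma le_iSup₂_Ioo_of_tendsto_nhdsLT {β : Type*} [CompleteLinearOrder β] [TopologicalSpace β]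
    [OrderTopology β] {h : ℝ → β} {s c : ℝ} {a : β} (hlim : Tendsto h (𝓝[<] s) (𝓝 a))
    (hcs : c < s) : a ≤ ⨆ u ∈ Ioo c s, h u :=
  le_of_tendsto hlim (mem_of_superset (Ioo_mem_nhdsLT hcs) fun u hu =>
    le_iSup₂ (f := fun u _ => h u) u hu)

namespace ENNReal

def absDiff (a b : ℝ≥0∞) : ℝ≥0∞ := max (a - b) (b - a)

lemma absDiff_eq_zero {a b : ℝ≥0∞} : absDiff a b = 0 ↔ a = b := by
  simp only [absDiff, max_eq_zero, tsub_eq_zero_iff_le]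
  exact ⟨fun h => le_antisymm h.1 h.2, fun h => ⟨h.le, h.ge⟩⟩

lemma absDiff_le_max (a b : ℝ≥0∞) : absDiff a b ≤ max a b :=
  max_le_max tsub_le_self tsub_le_self

lemma absDiff_add_add_le (a b c d : ℝ≥0∞) :
    absDiff (a + b) (c + d) ≤ absDiff a c + absDiff b d := by
  refine max_le (add_tsub_add_le_tsub_add_tsub.trans ?_) (add_tsub_add_le_tsub_add_tsub.trans ?_)
  · exact add_le_add (le_max_left _ _) (le_max_left _ _)
  · exact add_le_add (le_max_right _ _) (le_max_right _ _)

lemma absDiff_le_of_add_eq {a b x y : ℝ≥0∞} (h : a + x = b + y) (hx : x ≠ ∞) (hy : y ≠ ∞) :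
    absDiff a b ≤ absDiff x y := by
  have hab : a - b ≤ y - x := by
    rw [← ENNReal.add_sub_add_eq_sub_right (a := a) (b := b) hx, h]
    exact add_tsub_add_le_tsub_left
  have hba : b - a ≤ x - y := by
    rw [← ENNReal.add_sub_add_eq_sub_right (a := b) (b := a) hy, ← h]
    exact add_tsub_add_le_tsub_left
  exact max_le (hab.trans (le_max_right _ _)) (hba.trans (le_max_left _ _))

lemma absDiff_lintegral_le {α : Type*} [MeasurableSpace α] {μ : Measure α} {f g : α → ℝ≥0∞}
    (hf : Measurable f) (hg : Measurable g) :
    absDiff (∫⁻ x, f x ∂μ) (∫⁻ x, g x ∂μ) ≤ ∫⁻ x, absDiff (f x) (g x) ∂μ :=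
  max_le ((lintegral_sub_le g f hg).trans (lintegral_mono fun _ => le_max_left _ _))
    ((lintegral_sub_le f g hf).trans (lintegral_mono fun _ => le_max_right _ _))

lemma Tendsto.absDiff {α : Type*} {l : Filter α} {f g : α → ℝ≥0∞} {a b : ℝ≥0∞}
    (hf : Tendsto f l (𝓝 a)) (hg : Tendsto g l (𝓝 b)) (ha : a ≠ ∞) (hb : b ≠ ∞) :
    Tendsto (fun x => absDiff (f x) (g x)) l (𝓝 (absDiff a b)) :=
  (ENNReal.Tendsto.sub hf hg (Or.inl ha)).max (ENNReal.Tendsto.sub hg hf (Or.inl hb))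

end ENNReal

namespace MeasureTheory

variable {α : Type*} [MeasurableSpace α]

lemma setLIntegral_le_mul_of_le_indicator {μ : Measure α} {A E : Set α} (hE : MeasurableSet E)
    {F : α → ℝ≥0∞} {M : ℝ≥0∞} (hF : ∀ x ∈ A, F x ≤ E.indicator (fun _ => M) x) :
    ∫⁻ x in A, F x ∂μ ≤ M * μ E :=
  calc ∫⁻ x in A, F x ∂μ ≤ ∫⁻ x in A, E.indicator (fun _ => M) x ∂μ :=
        setLIntegral_mono (measurable_const.indicator hE) hF
    _ ≤ ∫⁻ x, E.indicator (fun _ => M) x ∂μ := setLIntegral_le_lintegral _ _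
    _ = M * μ E := lintegral_indicator_const hE M

lemma setLIntegral_finsetSum_measure {ι : Type*} (s : Finset ι) (μ : ι → Measure α)
    (f : α → ℝ≥0∞) {A : Set α} (hA : MeasurableSet A) :
    ∫⁻ x in A, f x ∂(∑ i ∈ s, μ i) = ∑ i ∈ s, ∫⁻ x in A, f x ∂μ i := by
  simp_rw [← lintegral_indicator hA, lintegral_finsetSum_measure]

lemma setLIntegral_eq_of_restrict_eq {μ ν : Measure α} {I A : Set α}
    (h : μ.restrict I = ν.restrict I) (hA : A ⊆ I) (f : α → ℝ≥0∞) :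
    ∫⁻ x in A, f x ∂μ = ∫⁻ x in A, f x ∂ν := by
  rw [← Measure.restrict_restrict_of_subset hA, h, Measure.restrict_restrict_of_subset hA]

lemma setLIntegral_withDensity_inv_mul_cancel {μ : Measure α} {f g : α → ℝ≥0∞}
    (hf : Measurable f) (hg : Measurable g) {A : Set α} (hA : MeasurableSet A)
    (hf₀ : ∀ x ∈ A, f x ≠ 0) (hf_top : ∀ x ∈ A, f x ≠ ∞) :
    ∫⁻ x in A, g x * f x ∂μ.withDensity (fun x => (f x)⁻¹) = ∫⁻ x in A, g x ∂μ := by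
  refine (setLIntegral_withDensity_eq_setLIntegral_mul _ hf.inv (hg.mul hf) hA).trans
    (setLIntegral_congr_fun hA fun x hx => ?_)
  rw [Pi.mul_apply, Pi.mul_apply, Pi.inv_apply, mul_comm, mul_assoc,
    ENNReal.mul_inv_cancel (hf₀ x hx) (hf_top x hx), mul_one]

lemma setLIntegral_withDensity_inv_self {μ : Measure α} {f : α → ℝ≥0∞} (hf : Measurable f)
    {A : Set α} (hA : MeasurableSet A) (hf₀ : ∀ x ∈ A, f x ≠ 0) (hf_top : ∀ x ∈ A, f x ≠ ∞) :
    ∫⁻ x in A, f x ∂μ.withDensity (fun x => (f x)⁻¹) = μ A := by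
  simpa using setLIntegral_withDensity_inv_mul_cancel hf measurable_const hA hf₀ hf_top (g := 1)

lemma withDensity_inv_apply_ne_top {μ : Measure α} [IsFiniteMeasure μ] {f : α → ℝ≥0∞}
    {A : Set α} (hA : MeasurableSet A) {c : ℝ≥0∞} (hc : c ≠ 0) (hf : ∀ x ∈ A, c ≤ f x) :
    μ.withDensity (fun x => (f x)⁻¹) A ≠ ∞ := by
  rw [withDensity_apply _ hA]
  refine ne_top_of_le_ne_top ?_ ((setLIntegral_mono measurable_const fun x hx =>
    ENNReal.inv_le_inv.mpr (hf x hx)).trans (setLIntegral_const A c⁻¹).le)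
  exact ENNReal.mul_ne_top (ENNReal.inv_ne_top.mpr hc) (measure_ne_top _ _)

lemma Measure.sum_map_restrict_fiber {β ι : Type*} [MeasurableSpace β] [MeasurableSpace ι]
    [MeasurableSingletonClass ι] (μ : Measure α) {X : α → β} {D : α → ι} (hX : Measurable X)
    (hD : Measurable D) (s : Finset ι) :
    ∑ j ∈ s, (μ.restrict {a | D a = j}).map X = (μ.restrict (D ⁻¹' s)).map X := by
  ext B hB
  rw [Measure.finsetSum_apply, Measure.map_apply hX hB, Measure.restrict_apply (hX hB),
    inter_comm, ← Measure.restrict_apply (hD (Finset.measurableSet s)),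
    ← sum_measure_preimage_singleton s fun j _ => hD (measurableSet_singleton j)]
  refine Finset.sum_congr rfl fun j _ => ?_
  rw [Measure.map_apply hX hB, Measure.restrict_apply (hX hB), Measure.restrict_apply
    (hD (measurableSet_singleton j)), inter_comm]
  rfl

lemma tendsto_measure_nhdsLT_of_antitone (μ : Measure α) [IsFiniteMeasure μ] {A : ℝ → Set α}
    (hA : ∀ r, MeasurableSet (A r)) (hanti : Antitone A) (s : ℝ) :
    Tendsto (fun r => μ (A r)) (𝓝[<] s) (𝓝 (μ (⋂ r < s, A r))) :=
  tendsto_measure_biInter_gt (ι := ℝᵒᵈ) (fun r _ => (hA r).nullMeasurableSet)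
    (fun _ _ _ hij => hanti hij)
    ⟨OrderDual.toDual (s - 1), show s - 1 < s by linarith, measure_ne_top _ _⟩

lemma measure_survival_add_exits_eq_one (Q : Measure α) [IsProbabilityMeasure Q]
    {X Y : α → ℝ} (hX : Measurable X) (hY : Measurable Y) (hXpos : ∀ᵐ a ∂Q, 0 < X a)
    (hYpos : ∀ᵐ a ∂Q, 0 < Y a) (t : ℝ) :
    Q {a | t < X a ∧ t ≤ Y a} +
      (Q {a | X a ≤ Y a ∧ X a ∈ Ioc 0 t} + Q {a | Y a < X a ∧ Y a ∈ Ioo 0 t}) = 1 := by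
  have hmeas₂ : MeasurableSet {a | X a ≤ Y a ∧ X a ∈ Ioc 0 t} :=
    (measurableSet_le hX hY).inter (hX measurableSet_Ioc)
  have hmeas₃ : MeasurableSet {a | Y a < X a ∧ Y a ∈ Ioo 0 t} :=
    (measurableSet_lt hY hX).inter (hY measurableSet_Ioo)
  have hdisj₁ : Disjoint {a | t < X a ∧ t ≤ Y a}
      ({a | X a ≤ Y a ∧ X a ∈ Ioc 0 t} ∪ {a | Y a < X a ∧ Y a ∈ Ioo 0 t}) :=
    disjoint_left.mpr fun a h₁ h₂ => by
      simp only [mem_union, mem_ofPred_eq, mem_Ioc, mem_Ioo] at h₁ h₂; grind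
  have hdisj₂ : Disjoint {a | X a ≤ Y a ∧ X a ∈ Ioc 0 t} {a | Y a < X a ∧ Y a ∈ Ioo 0 t} :=
    disjoint_left.mpr fun a h₂ h₃ => h₃.1.not_ge h₂.1
  have hmeas₁ : MeasurableSet {a | t < X a ∧ t ≤ Y a} :=
    (measurableSet_lt measurable_const hX).inter (measurableSet_le measurable_const hY)
  have hcover : ∀ᵐ a ∂Q, a ∈ {a | t < X a ∧ t ≤ Y a} ∪
      ({a | X a ≤ Y a ∧ X a ∈ Ioc 0 t} ∪ {a | Y a < X a ∧ Y a ∈ Ioo 0 t}) := by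
    filter_upwards [hXpos, hYpos] with a hXa hYa
    simp only [mem_union, mem_ofPred_eq, mem_Ioc, mem_Ioo]
    grind
  rw [← measure_union hdisj₂ hmeas₃, ← measure_union hdisj₁ (hmeas₂.union hmeas₃),
    (ae_mem_iff_measure_eq (hmeas₁.union (hmeas₂.union hmeas₃)).nullMeasurableSet).mp hcover,
    measure_univ]

/-- `measure_survival_add_exits_eq_one` for independent lifetimes with laws `μ` and `ν`. -/
lemma prod_survival_add_exits_eq_one (μ ν : Measure ℝ) [IsProbabilityMeasure μ]
    [IsProbabilityMeasure ν] (hμ : ∀ᵐ x ∂μ, 0 < x) (hν : ∀ᵐ y ∂ν, 0 < y) (t : ℝ) :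
    μ (Ioi t) * ν (Ici t) +
      ((∫⁻ x in Ioc 0 t, ν (Ici x) ∂μ) + ∫⁻ y in Ioo 0 t, μ (Ioi y) ∂ν) = 1 := by
  have h := measure_survival_add_exits_eq_one (μ.prod ν) measurable_fst measurable_snd
    (Measure.quasiMeasurePreserving_fst.ae hμ) (Measure.quasiMeasurePreserving_snd.ae hν) t
  rw [show {p : ℝ × ℝ | t < p.1 ∧ t ≤ p.2} = Ioi t ×ˢ Ici t from rfl, Measure.prod_prod,
    Measure.prod_apply (s := {p : ℝ × ℝ | p.1 ≤ p.2 ∧ p.1 ∈ Ioc 0 t})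
      ((measurableSet_le measurable_fst measurable_snd).inter (measurable_fst measurableSet_Ioc)),
    Measure.prod_apply_symm (s := {p : ℝ × ℝ | p.2 < p.1 ∧ p.2 ∈ Ioo 0 t})
      ((measurableSet_lt measurable_snd measurable_fst).inter (measurable_snd measurableSet_Ioo))]
    at h
  rw [← lintegral_indicator measurableSet_Ioc, ← lintegral_indicator measurableSet_Ioo]
  convert h using 5 with x y
  · by_cases hx : x ∈ Ioc 0 t <;>
      simp only [preimage_ofPred_eq, hx, and_true, and_false, indicator_of_mem, Ici_def,
        indicator_of_notMem, not_false_eq_true, ofPred_false, measure_empty]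
  · by_cases hy : y ∈ Ioo 0 t <;>
      simp only [preimage_ofPred_eq, hy, and_true, and_false, indicator_of_mem, Ioi_def,
        indicator_of_notMem, not_false_eq_true, ofPred_false, measure_empty]

lemma exists_measure_Ioc_lt (ρ : Measure ℝ) [IsFiniteMeasure ρ] {c b : ℝ}
    (hcb : c < b) {ε : ℝ≥0∞} (hε : 0 < ε) : ∃ c' ∈ Ioc c b, ρ (Ioc c c') < ε := by
  have hempty : ⋂ r > c, Ioc c r = ∅ :=
    eq_empty_of_forall_notMem fun x hx => by
      have hcx : c < x := (mem_iInter₂.mp hx (c + 1) (by linarith)).1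
      have := (mem_iInter₂.mp hx ((c + x) / 2) (by linarith)).2
      linarith
  have hlim : Tendsto (fun r => ρ (Ioc c r)) (𝓝[>] c) (𝓝 0) := by
    simpa [Function.comp_def, hempty] using tendsto_measure_biInter_gt (μ := ρ)
      (s := fun r => Ioc c r) (fun r _ => measurableSet_Ioc.nullMeasurableSet)
      (fun i j _ hij => Ioc_subset_Ioc_right hij) ⟨b, hcb, measure_ne_top _ _⟩
  obtain ⟨r, hrε, hr⟩ := ((hlim.eventually (gt_mem_nhds hε)).and (Ioc_mem_nhdsGT hcb)).exists
  exact ⟨r, hr, hrε⟩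

lemma Measure.restrict_Ioc_eq_of_forall_Ioc_eq {ρ σ : Measure ℝ} {t₀ : ℝ} (ht₀ : 0 ≤ t₀)
    (hρ : ρ (Ioc 0 t₀) ≠ ∞) (h : ∀ t ∈ Icc 0 t₀, ρ (Ioc 0 t) = σ (Ioc 0 t)) :
    ρ.restrict (Ioc 0 t₀) = σ.restrict (Ioc 0 t₀) := by
  have : IsFiniteMeasure (ρ.restrict (Ioc 0 t₀)) := isFiniteMeasure_restrict.mpr hρ
  have hIoc : ∀ a b, 0 ≤ a → a ≤ b → b ≤ t₀ → ρ (Ioc a b) = σ (Ioc a b) := by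
    intro a b ha hab hb
    have hsplit : ∀ μ : Measure ℝ, μ (Ioc 0 a) + μ (Ioc a b) = μ (Ioc 0 b) := fun μ => by
      rw [← measure_union (Ioc_disjoint_Ioc_of_le le_rfl) measurableSet_Ioc,
        Ioc_union_Ioc_eq_Ioc ha hab]
    have hfin : ρ (Ioc 0 a) ≠ ∞ :=
      ne_top_of_le_ne_top hρ (measure_mono (Ioc_subset_Ioc_right (hab.trans hb)))
    refine (ENNReal.add_right_inj hfin).mp ?_
    rw [hsplit, h b ⟨ha.trans hab, hb⟩, h a ⟨ha, hab.trans hb⟩, hsplit]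
  refine Measure.ext_of_Ioc_finite _ _ ?_ fun a b hab => ?_
  · simp only [Measure.restrict_apply_univ]
    exact h t₀ ⟨ht₀, le_rfl⟩
  · rw [Measure.restrict_apply measurableSet_Ioc, Measure.restrict_apply measurableSet_Ioc,
      Ioc_inter_Ioc]
    rcases le_total (min b t₀) (max a 0) with hle | hle
    · simp [Ioc_eq_empty_of_le hle]
    · exact hIoc _ _ (le_max_right _ _) hle (min_le_right _ _)

theorem eq_zero_of_le_lintegral_gronwall {ρ₁ ρ₀ : Measure ℝ} [IsFiniteMeasure ρ₁]
    [IsFiniteMeasure ρ₀] {h hm : ℝ → ℝ≥0∞} {B : ℝ≥0∞} {t₀ : ℝ} (hB : B ≠ ∞)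
    (hbdd : ∀ s, h s ≤ B) (hlim : ∀ s ∈ Ioc 0 t₀, Tendsto h (𝓝[<] s) (𝓝 (hm s)))
    (hle : ∀ t ∈ Icc 0 t₀, h t ≤ (∫⁻ s in Ioc 0 t, hm s ∂ρ₁) + ∫⁻ s in Ioo 0 t, h s ∂ρ₀) :
    ∀ t ∈ Icc 0 t₀, h t = 0 := by
  have hm_le : ∀ s ∈ Ioc 0 t₀, ∀ c < s, hm s ≤ ⨆ u ∈ Ioo c s, h u := fun s hs _ hcs =>
    le_iSup₂_Ioo_of_tendsto_nhdsLT (hlim s hs) hcs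
  have hm_zero : ∀ c ≤ t₀, (∀ x ∈ Ico 0 c, h x = 0) → ∀ s ∈ Ioc 0 c, hm s = 0 :=
    fun c hct hbelow s hs => nonpos_iff_eq_zero.mp <|
      (hm_le s ⟨hs.1, hs.2.trans hct⟩ 0 hs.1).trans <| iSup₂_le fun u hu =>
        (hbelow u ⟨hu.1.le, hu.2.trans_le hs.2⟩).le
  refine Real.forall_mem_Icc_of_induction (fun c hc hbelow => ?_) (fun c hc hupto => ?_)
  · refine nonpos_iff_eq_zero.mp ((hle c hc).trans_eq ?_)
    rw [setLIntegral_congr_fun measurableSet_Ioc (hm_zero c hc.2 hbelow),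
      setLIntegral_congr_fun measurableSet_Ioo fun s hs => hbelow s ⟨hs.1.le, hs.2⟩]
    simp
  -- On a short interval `(c, c']` of `ρ₁ + ρ₀`-mass `< 1` the inequality contracts `sup h`.
  obtain ⟨c', ⟨hcc', hc't₀⟩, hsmall⟩ := exists_measure_Ioc_lt (ρ₁ + ρ₀) hc.2 one_pos
  set M := ⨆ u ∈ Ioc c c', h u
  have hh_le : ∀ s ∈ Ioc 0 c', h s ≤ (Ioc c c').indicator (fun _ => M) s := fun s hs => by
    rcases le_or_gt s c with hsc | hcs
    · simp [hupto s ⟨hs.1.le, hsc⟩]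
    · rw [indicator_of_mem (show s ∈ Ioc c c' from ⟨hcs, hs.2⟩)]
      exact le_iSup₂ (f := fun u _ => h u) s ⟨hcs, hs.2⟩
  have hhm_le : ∀ s ∈ Ioc 0 c', hm s ≤ (Ioc c c').indicator (fun _ => M) s := fun s hs => by
    rcases le_or_gt s c with hsc | hcs
    · simp [hm_zero c hc.2.le (fun x hx => hupto x ⟨hx.1, hx.2.le⟩) s ⟨hs.1, hsc⟩]
    · rw [indicator_of_mem (show s ∈ Ioc c c' from ⟨hcs, hs.2⟩)]
      exact (hm_le s ⟨hs.1, hs.2.trans hc't₀⟩ c hcs).trans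
        (iSup₂_le fun u hu => le_iSup₂ (f := fun u _ => h u) u ⟨hu.1, hu.2.le.trans hs.2⟩)
  have hM : M ≤ M * (ρ₁ + ρ₀) (Ioc c c') := iSup₂_le fun t ht => by
    have ht' : t ∈ Icc 0 t₀ := ⟨hc.1.trans ht.1.le, ht.2.trans hc't₀⟩
    refine (hle t ht').trans ?_
    rw [Measure.add_apply, mul_add]
    exact add_le_add
      (setLIntegral_le_mul_of_le_indicator measurableSet_Ioc fun s hs =>
        hhm_le s ⟨hs.1, hs.2.trans ht.2⟩)
      (setLIntegral_le_mul_of_le_indicator measurableSet_Ioc fun s hs =>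
        hh_le s ⟨hs.1, hs.2.le.trans ht.2⟩)
  have hM0 : M = 0 := by
    by_contra hM0
    have hMfin : M ≠ ∞ := ne_top_of_le_ne_top hB (iSup₂_le fun u _ => hbdd u)
    have := ENNReal.mul_lt_mul_left hM0 hMfin hsmall
    rw [one_mul, mul_comm] at this
    exact hM.not_gt this
  exact ⟨c', hcc', fun x hx => nonpos_iff_eq_zero.mp (hM0 ▸ le_iSup₂ (f := fun u _ => h u) x hx)⟩

end MeasureTheory

section SurvivalFunctions

variable {Ω : Type*} [MeasurableSpace Ω] (P : Measure Ω) {X Y : Ω → ℝ}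

lemma measurable_measure_setOf_lt : Measurable fun s : ℝ => P {ω | s < X ω} :=
  Antitone.measurable fun _ _ h => measure_mono fun _ hω => h.trans_lt hω

lemma measurable_measure_setOf_le : Measurable fun s : ℝ => P {ω | s ≤ X ω} :=
  Antitone.measurable fun _ _ h => measure_mono fun _ hω => h.trans hω

lemma measurable_measure_setOf_lt_and_le : Measurable fun s : ℝ => P {ω | s < X ω ∧ s ≤ Y ω} :=
  Antitone.measurable fun _ _ h => measure_mono fun _ hω => ⟨h.trans_lt hω.1, h.trans hω.2⟩

lemma measurable_measure_setOf_le_and_le : Measurable fun s : ℝ => P {ω | s ≤ X ω ∧ s ≤ Y ω} :=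
  Antitone.measurable fun _ _ h => measure_mono fun _ hω => ⟨h.trans hω.1, h.trans hω.2⟩

lemma measure_inter_setOf_le_eq_add (hX : Measurable X) {A : Set Ω}
    (hA : MeasurableSet A) (t : ℝ) :
    P (A ∩ {ω | t ≤ X ω}) = P (A ∩ {ω | t < X ω}) + P (A ∩ {ω | X ω = t}) := by
  rw [← measure_union (disjoint_left.mpr fun ω h₁ h₂ => h₁.2.ne' h₂.2)
    (hA.inter (measurableSet_eq_fun hX measurable_const)), ← inter_union_distrib_left]
  congr 2
  ext ω
  simp only [mem_ofPred_eq, mem_union, le_iff_lt_or_eq, eq_comm]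

variable [IsFiniteMeasure P]

lemma tendsto_measure_setOf_lt_and_le_nhdsLT (hX : Measurable X) (hY : Measurable Y) (s : ℝ) :
    Tendsto (fun r => P {ω | r < X ω ∧ r ≤ Y ω}) (𝓝[<] s) (𝓝 (P {ω | s ≤ X ω ∧ s ≤ Y ω})) := by
  convert tendsto_measure_nhdsLT_of_antitone P (A := fun r => {ω | r < X ω ∧ r ≤ Y ω})
    (fun r => (measurableSet_lt measurable_const hX).inter (measurableSet_le measurable_const hY))
    (fun _ _ h _ hω => ⟨h.trans_lt hω.1, h.trans hω.2⟩) s using 3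
  ext ω
  simp [forall_and, forall_lt_iff_le, forall_lt_imp_le_iff_le_of_dense]

lemma tendsto_measure_setOf_lt_nhdsLT (hX : Measurable X) (s : ℝ) :
    Tendsto (fun r => P {ω | r < X ω}) (𝓝[<] s) (𝓝 (P {ω | s ≤ X ω})) := by
  convert tendsto_measure_nhdsLT_of_antitone P (fun r => measurableSet_lt measurable_const hX)
    (fun _ _ h _ hω => h.trans_lt hω) s using 3
  ext ω
  simp [forall_lt_iff_le]

lemma tendsto_measure_setOf_le_nhdsLT (hY : Measurable Y) (s : ℝ) :
    Tendsto (fun r => P {ω | r ≤ Y ω}) (𝓝[<] s) (𝓝 (P {ω | s ≤ Y ω})) := by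
  convert tendsto_measure_nhdsLT_of_antitone P (fun r => measurableSet_le measurable_const hY)
    (fun _ _ h _ hω => h.trans hω) s using 3
  ext ω
  simp [forall_lt_imp_le_iff_le_of_dense]

lemma tendsto_absDiff_survival_nhdsLT (hX : Measurable X) (hY : Measurable Y) (s : ℝ) :
    Tendsto (fun r => absDiff (P {ω | r < X ω ∧ r ≤ Y ω}) (P {ω | r < X ω} * P {ω | r ≤ Y ω}))
      (𝓝[<] s) (𝓝 (absDiff (P {ω | s ≤ X ω ∧ s ≤ Y ω}) (P {ω | s ≤ X ω} * P {ω | s ≤ Y ω}))) :=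
  ENNReal.Tendsto.absDiff (tendsto_measure_setOf_lt_and_le_nhdsLT P hX hY s)
    (ENNReal.Tendsto.mul (tendsto_measure_setOf_lt_nhdsLT P hX s) (Or.inr (measure_ne_top _ _))
      (tendsto_measure_setOf_le_nhdsLT P hY s) (Or.inr (measure_ne_top _ _)))
    (measure_ne_top _ _) (mul_ne_top (measure_ne_top _ _) (measure_ne_top _ _))

end SurvivalFunctions

section CompetingRisks

variable {Ω : Type*} [MeasurableSpace Ω] (P : Measure Ω) {T C : Ω → ℝ}

/-- On `Ioc 0 t` this is the paper's `∑ⱼ Hⱼ(t)` for `X = T` and `H₀(t)` for `X = C`. -/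
noncomputable def hazardMeasure (X : Ω → ℝ) : Measure ℝ :=
  (P.map X).withDensity fun s => (P {ω | s ≤ X ω})⁻¹

/-- On `Ioc 0 t` this is the paper's `∑ⱼ H̃ⱼ(t)`. -/
noncomputable def observedEventHazard (T C : Ω → ℝ) : Measure ℝ :=
  ((P.restrict {ω | T ω ≤ C ω}).map T).withDensity fun s => (P {ω | s ≤ T ω ∧ s ≤ C ω})⁻¹

/-- The paper's `Ȟ₀`: its at-risk probability is `Š(s) = P(T > s, C ≥ s)`, since ties are
counted as events. -/
noncomputable def observedCensoringHazard (T C : Ω → ℝ) : Measure ℝ :=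
  ((P.restrict {ω | C ω < T ω}).map C).withDensity fun s => (P {ω | s < T ω ∧ s ≤ C ω})⁻¹

lemma observedEventHazard_Ioc_ne_top [IsFiniteMeasure P] {t₀ : ℝ}
    (ht₀ : P {ω | t₀ < T ω ∧ t₀ ≤ C ω} ≠ 0) : observedEventHazard P T C (Ioc 0 t₀) ≠ ∞ :=
  withDensity_inv_apply_ne_top measurableSet_Ioc ht₀ fun _ hs =>
    measure_mono fun _ hω => ⟨hs.2.trans hω.1.le, hs.2.trans hω.2⟩

lemma observedCensoringHazard_Ioc_ne_top [IsFiniteMeasure P] {t₀ : ℝ}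
    (ht₀ : P {ω | t₀ < T ω ∧ t₀ ≤ C ω} ≠ 0) : observedCensoringHazard P T C (Ioc 0 t₀) ≠ ∞ :=
  withDensity_inv_apply_ne_top measurableSet_Ioc ht₀ fun _ hs =>
    measure_mono fun _ hω => ⟨hs.2.trans_lt hω.1, hs.2.trans hω.2⟩

lemma survival_add_lintegral_observedHazards_eq_one [IsProbabilityMeasure P] (hT : Measurable T)
    (hC : Measurable C) (hTpos : ∀ᵐ ω ∂P, 0 < T ω) (hCpos : ∀ᵐ ω ∂P, 0 < C ω) {u : ℝ}
    (hu : P {ω | u < T ω ∧ u ≤ C ω} ≠ 0) :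
    P {ω | u < T ω ∧ u ≤ C ω} +
      ((∫⁻ s in Ioc 0 u, P {ω | s ≤ T ω ∧ s ≤ C ω} ∂observedEventHazard P T C) +
        ∫⁻ s in Ioo 0 u, P {ω | s < T ω ∧ s ≤ C ω} ∂observedCensoringHazard P T C) = 1 := by
  have hpos : ∀ s ≤ u, P {ω | s < T ω ∧ s ≤ C ω} ≠ 0 := fun s hs =>
    ne_bot_of_le_ne_bot hu (measure_mono fun _ hω => ⟨hs.trans_lt hω.1, hs.trans hω.2⟩)
  rw [observedEventHazard, observedCensoringHazard,
    setLIntegral_withDensity_inv_self (measurable_measure_setOf_le_and_le P) measurableSet_Ioc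
      (fun s hs => ne_bot_of_le_ne_bot (hpos s hs.2) (measure_mono fun _ hω => ⟨hω.1.le, hω.2⟩))
      (fun _ _ => measure_ne_top _ _),
    setLIntegral_withDensity_inv_self (measurable_measure_setOf_lt_and_le P) measurableSet_Ioo
      (fun s hs => hpos s hs.2.le) (fun _ _ => measure_ne_top _ _),
    Measure.map_apply hT measurableSet_Ioc, Measure.map_apply hC measurableSet_Ioo,
    Measure.restrict_apply (hT measurableSet_Ioc), Measure.restrict_apply (hC measurableSet_Ioo)]
  convert measure_survival_add_exits_eq_one P hT hC hTpos hCpos u using 4 <;>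
    rw [inter_comm] <;> rfl

lemma survival_mul_add_lintegral_hazards_eq_one [IsProbabilityMeasure P] (hT : Measurable T)
    (hC : Measurable C) (hTpos : ∀ᵐ ω ∂P, 0 < T ω) (hCpos : ∀ᵐ ω ∂P, 0 < C ω) {u : ℝ}
    (hTu : P {ω | u < T ω} ≠ 0) (hCu : P {ω | u ≤ C ω} ≠ 0) :
    P {ω | u < T ω} * P {ω | u ≤ C ω} +
      ((∫⁻ s in Ioc 0 u, P {ω | s ≤ T ω} * P {ω | s ≤ C ω} ∂hazardMeasure P T) +
        ∫⁻ s in Ioo 0 u, P {ω | s < T ω} * P {ω | s ≤ C ω} ∂hazardMeasure P C) = 1 := by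
  have hCpos' : ∀ s ≤ u, P {ω | s ≤ C ω} ≠ 0 := fun s hs =>
    ne_bot_of_le_ne_bot hCu (measure_mono fun _ hω => hs.trans hω)
  have hTpos' : ∀ s ≤ u, P {ω | s ≤ T ω} ≠ 0 := fun s hs =>
    ne_bot_of_le_ne_bot hTu (measure_mono fun _ hω => hs.trans hω.le)
  simp_rw [mul_comm (P {ω | _ ≤ T ω})]
  rw [hazardMeasure, hazardMeasure,
    setLIntegral_withDensity_inv_mul_cancel (measurable_measure_setOf_le P)
      (measurable_measure_setOf_le P) measurableSet_Ioc
      (fun s hs => hTpos' s hs.2) (fun _ _ => measure_ne_top _ _),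
    setLIntegral_withDensity_inv_mul_cancel (measurable_measure_setOf_le P)
      (measurable_measure_setOf_lt P) measurableSet_Ioo
      (fun s hs => hCpos' s hs.2.le) (fun _ _ => measure_ne_top _ _)]
  have := Measure.isProbabilityMeasure_map (μ := P) hT.aemeasurable
  have := Measure.isProbabilityMeasure_map (μ := P) hC.aemeasurable
  have hlaw := prod_survival_add_exits_eq_one (P.map T) (P.map C)
    ((ae_map_iff hT.aemeasurable measurableSet_Ioi).mpr hTpos)
    ((ae_map_iff hC.aemeasurable measurableSet_Ioi).mpr hCpos) u
  simp only [Measure.map_apply hT measurableSet_Ioi, Measure.map_apply hC measurableSet_Ici] at hlaw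
  exact hlaw

theorem joint_survival_eq_mul_of_restrict_hazard_eq [IsProbabilityMeasure P] (hT : Measurable T)
    (hC : Measurable C) (hTpos : ∀ᵐ ω ∂P, 0 < T ω) (hCpos : ∀ᵐ ω ∂P, 0 < C ω) {t₀ : ℝ}
    (ht₀ : P {ω | t₀ < T ω ∧ t₀ ≤ C ω} ≠ 0)
    (hevent : (observedEventHazard P T C).restrict (Ioc 0 t₀) =
      (hazardMeasure P T).restrict (Ioc 0 t₀))
    (hcens : (observedCensoringHazard P T C).restrict (Ioc 0 t₀) =
      (hazardMeasure P C).restrict (Ioc 0 t₀)) :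
    ∀ t ∈ Icc 0 t₀, P {ω | t < T ω ∧ t ≤ C ω} = P {ω | t < T ω} * P {ω | t ≤ C ω} := by
  have := isFiniteMeasure_restrict.mpr (observedEventHazard_Ioc_ne_top P ht₀)
  have := isFiniteMeasure_restrict.mpr (observedCensoringHazard_Ioc_ne_top P ht₀)
  have hpos : ∀ t ≤ t₀, P {ω | t < T ω ∧ t ≤ C ω} ≠ 0 := fun t ht =>
    ne_bot_of_le_ne_bot ht₀ (measure_mono fun _ hω => ⟨ht.trans_lt hω.1, ht.trans hω.2⟩)
  suffices ∀ t ∈ Icc 0 t₀, absDiff (P {ω | t < T ω ∧ t ≤ C ω})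
      (P {ω | t < T ω} * P {ω | t ≤ C ω}) = 0 from fun t ht => absDiff_eq_zero.mp (this t ht)
  refine eq_zero_of_le_lintegral_gronwall (ρ₁ := (observedEventHazard P T C).restrict (Ioc 0 t₀))
    (ρ₀ := (observedCensoringHazard P T C).restrict (Ioc 0 t₀))
    (hm := fun s => absDiff (P {ω | s ≤ T ω ∧ s ≤ C ω}) (P {ω | s ≤ T ω} * P {ω | s ≤ C ω}))
    one_ne_top (fun _ => (absDiff_le_max _ _).trans
      (max_le prob_le_one (mul_le_one' prob_le_one prob_le_one)))
    (fun s _ => tendsto_absDiff_survival_nhdsLT P hT hC s) fun t ht => ?_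
  have hIoc : Ioc 0 t ⊆ Ioc 0 t₀ := Ioc_subset_Ioc_right ht.2
  have hIoo : Ioo 0 t ⊆ Ioc 0 t₀ := Ioo_subset_Ioc_self.trans hIoc
  have hobs := survival_add_lintegral_observedHazards_eq_one P hT hC hTpos hCpos (hpos t ht.2)
  have hind := survival_mul_add_lintegral_hazards_eq_one P hT hC hTpos hCpos
    (ne_bot_of_le_ne_bot (hpos t ht.2) (measure_mono fun _ hω => hω.1))
    (ne_bot_of_le_ne_bot (hpos t ht.2) (measure_mono fun _ hω => hω.2))
  rw [Measure.restrict_restrict_of_subset hIoc, Measure.restrict_restrict_of_subset hIoo]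
  rw [setLIntegral_eq_of_restrict_eq hevent.symm hIoc,
    setLIntegral_eq_of_restrict_eq hcens.symm hIoo] at hind
  calc _ ≤ _ := absDiff_le_of_add_eq (hobs.trans hind.symm)
          (ne_top_of_le_ne_top one_ne_top (hobs ▸ le_add_self))
          (ne_top_of_le_ne_top one_ne_top (hind ▸ le_add_self))
    _ ≤ _ := absDiff_add_add_le _ _ _ _
    _ ≤ _ := add_le_add
      (absDiff_lintegral_le (measurable_measure_setOf_le_and_le P)
        ((measurable_measure_setOf_le P).mul (measurable_measure_setOf_le P)))
      (absDiff_lintegral_le (measurable_measure_setOf_lt_and_le P)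
        ((measurable_measure_setOf_lt P).mul (measurable_measure_setOf_le P)))

lemma measure_lt_and_eq_eq_mul_of_restrict_hazard_eq [IsFiniteMeasure P] (hC : Measurable C)
    {t₀ : ℝ} (ht₀ : 0 < t₀) (hpos : P {ω | t₀ < T ω ∧ t₀ ≤ C ω} ≠ 0)
    (hjoint : P {ω | t₀ < T ω ∧ t₀ ≤ C ω} = P {ω | t₀ < T ω} * P {ω | t₀ ≤ C ω})
    (hcens : (observedCensoringHazard P T C).restrict (Ioc 0 t₀) =
      (hazardMeasure P C).restrict (Ioc 0 t₀)) :
    P {ω | t₀ < T ω ∧ C ω = t₀} = P {ω | t₀ < T ω} * P {ω | C ω = t₀} := by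
  have hatom := congrArg (· {t₀}) hcens
  have hset : C ⁻¹' {t₀} ∩ {ω | C ω < T ω} = {ω | t₀ < T ω ∧ C ω = t₀} := by
    ext ω
    simp only [mem_inter_iff, mem_preimage, mem_singleton_iff, mem_ofPred_eq]
    constructor
    · rintro ⟨rfl, h⟩
      exact ⟨h, rfl⟩
    · rintro ⟨h, rfl⟩
      exact ⟨rfl, h⟩
  simp only [Measure.restrict_apply (measurableSet_singleton _),
    inter_eq_left.mpr (singleton_subset_iff.mpr (right_mem_Ioc.mpr ht₀)), observedCensoringHazard,
    hazardMeasure, withDensity_apply _ (measurableSet_singleton _), lintegral_singleton,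
    Measure.map_apply hC (measurableSet_singleton _),
    Measure.restrict_apply (hC (measurableSet_singleton _)), hset] at hatom
  calc P {ω | t₀ < T ω ∧ C ω = t₀}
      = P {ω | t₀ < T ω ∧ t₀ ≤ C ω} *
          ((P {ω | t₀ < T ω ∧ t₀ ≤ C ω})⁻¹ * P {ω | t₀ < T ω ∧ C ω = t₀}) :=
        (ENNReal.mul_inv_cancel_left hpos (measure_ne_top _ _)).symm
    _ = P {ω | t₀ < T ω} * (P {ω | t₀ ≤ C ω} * ((P {ω | t₀ ≤ C ω})⁻¹ * P {ω | C ω = t₀})) := by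
        rw [hatom, hjoint, mul_assoc]
        rfl
    _ = P {ω | t₀ < T ω} * P {ω | C ω = t₀} := by
        rw [ENNReal.mul_inv_cancel_left (a := P {ω | t₀ ≤ C ω})
          (ne_bot_of_le_ne_bot hpos (measure_mono fun _ hω => hω.2)) (measure_ne_top _ _)]

lemma measure_lt_and_lt_eq_mul_of_atom_eq [IsFiniteMeasure P] (hT : Measurable T)
    (hC : Measurable C) {t : ℝ}
    (hjoint : P {ω | t < T ω ∧ t ≤ C ω} = P {ω | t < T ω} * P {ω | t ≤ C ω})
    (hatom : P {ω | t < T ω ∧ C ω = t} = P {ω | t < T ω} * P {ω | C ω = t}) :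
    P {ω | t < T ω ∧ t < C ω} = P {ω | t < T ω} * P {ω | t < C ω} := by
  have hsplit := measure_inter_setOf_le_eq_add P hC (A := {ω | t < T ω})
    (measurableSet_lt measurable_const hT) t
  have hsplit_univ := measure_inter_setOf_le_eq_add P hC MeasurableSet.univ t
  simp only [univ_inter] at hsplit_univ
  refine (ENNReal.add_left_inj (mul_ne_top (measure_ne_top P {ω | t < T ω})
    (measure_ne_top P {ω | C ω = t}))).mp ?_
  rw [← mul_add, ← hsplit_univ, ← hjoint, ← hatom]
  exact hsplit.symm

theorem product_structure_of_hazard_eq [IsProbabilityMeasure P] (hT : Measurable T)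
    (hC : Measurable C) (hTpos : ∀ᵐ ω ∂P, 0 < T ω) (hCpos : ∀ᵐ ω ∂P, 0 < C ω) {t₀ : ℝ}
    (ht₀ : 0 ≤ t₀) (hpos : P {ω | t₀ < T ω ∧ t₀ < C ω} ≠ 0)
    (hevent : ∀ t ∈ Icc 0 t₀, observedEventHazard P T C (Ioc 0 t) = hazardMeasure P T (Ioc 0 t))
    (hcens : ∀ t ∈ Icc 0 t₀,
      observedCensoringHazard P T C (Ioc 0 t) = hazardMeasure P C (Ioc 0 t)) :
    P {ω | t₀ < T ω ∧ t₀ < C ω} = P {ω | t₀ < T ω} * P {ω | t₀ < C ω} ∧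
      P {ω | t₀ < T ω ∧ t₀ ≤ C ω} = P {ω | t₀ < T ω} * P {ω | t₀ ≤ C ω} := by
  have hpos' : P {ω | t₀ < T ω ∧ t₀ ≤ C ω} ≠ 0 :=
    ne_bot_of_le_ne_bot hpos (measure_mono fun _ hω => ⟨hω.1, hω.2.le⟩)
  have hcens' := Measure.restrict_Ioc_eq_of_forall_Ioc_eq ht₀
    (observedCensoringHazard_Ioc_ne_top P hpos') hcens
  have hjoint := joint_survival_eq_mul_of_restrict_hazard_eq P hT hC hTpos hCpos hpos'
    (Measure.restrict_Ioc_eq_of_forall_Ioc_eq ht₀ (observedEventHazard_Ioc_ne_top P hpos') hevent)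
    hcens' t₀ ⟨ht₀, le_rfl⟩
  refine ⟨measure_lt_and_lt_eq_mul_of_atom_eq P hT hC hjoint ?_, hjoint⟩
  rcases ht₀.eq_or_lt with rfl | ht₀
  · have hC0 : P {ω | C ω = 0} = 0 :=
      measure_mono_null (fun ω (hω : C ω = 0) => hω.not_gt) (ae_iff.mp hCpos)
    rw [hC0, mul_zero]
    exact measure_mono_null (fun _ hω => hω.2) hC0
  · exact measure_lt_and_eq_eq_mul_of_restrict_hazard_eq P hC ht₀ hpos' hjoint hcens'

lemma hazardMeasure_Ioc_eq_sum {ι : Type*} [MeasurableSpace ι] [MeasurableSingletonClass ι]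
    {D : Ω → ι} (hT : Measurable T) (hD : Measurable D) (s : Finset ι) (hDs : ∀ ω, D ω ∈ s)
    (u : ℝ) : hazardMeasure P T (Ioc 0 u) =
      ∑ j ∈ s, ∫⁻ x in Ioc 0 u, (P {ω | x ≤ T ω})⁻¹ ∂(P.restrict {ω | D ω = j}).map T := by
  rw [hazardMeasure, withDensity_apply _ measurableSet_Ioc,
    ← setLIntegral_finsetSum_measure _ _ _ measurableSet_Ioc,
    Measure.sum_map_restrict_fiber P hT hD, (eq_univ_of_forall hDs : D ⁻¹' s = univ),
    Measure.restrict_univ]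

variable {D : Ω → ℕ}

lemma observedEventHazard_Ioc_eq_sum (hT : Measurable T) (hC : Measurable C) (hD : Measurable D)
    {d : ℕ} (hDrange : ∀ ω, 1 ≤ D ω ∧ D ω ≤ d) (u : ℝ) :
    observedEventHazard P T C (Ioc 0 u) = ∑ j ∈ Finset.Icc 1 d,
      ∫⁻ s in Ioc 0 u, (P {ω | s ≤ min (T ω) (C ω)})⁻¹
        ∂(P.restrict {ω | (if T ω ≤ C ω then D ω else 0) = j}).map fun ω => min (T ω) (C ω) := by
  have hfiber : (fun ω => if T ω ≤ C ω then D ω else 0) ⁻¹' (Finset.Icc 1 d : Set ℕ) =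
      {ω | T ω ≤ C ω} := by
    ext ω
    by_cases h : T ω ≤ C ω <;> simp [h, hDrange ω]
  have hmin : (P.restrict {ω | T ω ≤ C ω}).map (fun ω => min (T ω) (C ω)) =
      (P.restrict {ω | T ω ≤ C ω}).map T :=
    Measure.map_congr ((ae_restrict_iff' (measurableSet_le hT hC)).mpr
      (Eventually.of_forall fun _ h => min_eq_left h))
  rw [← setLIntegral_finsetSum_measure _ _ _ measurableSet_Ioc,
    Measure.sum_map_restrict_fiber P (hT.min hC)
      (Measurable.ite (measurableSet_le hT hC) hD measurable_const),
    hfiber, hmin, observedEventHazard, withDensity_apply _ measurableSet_Ioc]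
  simp only [le_min_iff]

lemma observedCensoringHazard_Ioc_eq (hT : Measurable T) (hC : Measurable C)
    (hD : ∀ ω, 1 ≤ D ω) (u : ℝ) :
    observedCensoringHazard P T C (Ioc 0 u) =
      ∫⁻ s in Ioc 0 u, (P {ω | s < T ω ∧ s ≤ C ω})⁻¹
        ∂(P.restrict {ω | (if T ω ≤ C ω then D ω else 0) = 0}).map fun ω => min (T ω) (C ω) := by
  have hfiber : {ω | (if T ω ≤ C ω then D ω else 0) = 0} = {ω | C ω < T ω} := by
    ext ω
    by_cases h : T ω ≤ C ω
    · simp [h, not_lt.mpr h, Nat.one_le_iff_ne_zero.mp (hD ω)]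
    · simp [h, not_le.mp h]
  have hmin : (P.restrict {ω | C ω < T ω}).map (fun ω => min (T ω) (C ω)) =
      (P.restrict {ω | C ω < T ω}).map C :=
    Measure.map_congr ((ae_restrict_iff' (measurableSet_lt hC hT)).mpr
      (Eventually.of_forall fun _ h => min_eq_right h.le))
  rw [hfiber, hmin, observedCensoringHazard, withDensity_apply _ measurableSet_Ioc]

end CompetingRisks

theorem pointwise_independence_implies_product_structure_general
    {Ω : Type*} [m0 : MeasurableSpace Ω] (P : Measure Ω) [IsProbabilityMeasure P]
    (d : ℕ)
    (T C : Ω → ℝ) (D : Ω → ℕ)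
    (hT : Measurable T) (hC : Measurable C) (hD : Measurable D)
    (hTpos : ∀ᵐ ω ∂P, 0 < T ω) (hCpos : ∀ᵐ ω ∂P, 0 < C ω)
    (hDrange : ∀ ω, 1 ≤ D ω ∧ D ω ≤ d)
    (Tt : Ω → ℝ) (hTtdef : ∀ ω, Tt ω = min (T ω) (C ω))
    (Dt : Ω → ℕ) (hDtdef : ∀ ω, Dt ω = if T ω ≤ C ω then D ω else 0)
    (μ μt : ℕ → Measure ℝ)
    (hμ : ∀ j, μ j = Measure.map T (P.restrict {ω | D ω = j}))
    (hμt : ∀ j, μt j = Measure.map Tt (P.restrict {ω | Dt ω = j}))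
    (νC : Measure ℝ) (hνC : νC = Measure.map C P)
    (H Ht : ℕ → ℝ → ℝ≥0∞)
    (hH : ∀ j t, H j t = ∫⁻ s in Ioc 0 t, (P {ω | s ≤ T ω})⁻¹ ∂(μ j))
    (hHt : ∀ j t, Ht j t = ∫⁻ s in Ioc 0 t, (P {ω | s ≤ Tt ω})⁻¹ ∂(μt j))
    (H0 : ℝ → ℝ≥0∞) (hH0 : ∀ t, H0 t = ∫⁻ s in Ioc 0 t, (P {ω | s ≤ C ω})⁻¹ ∂νC)
    (Hc0 : ℝ → ℝ≥0∞)
    (hHc0 : ∀ t, Hc0 t = ∫⁻ s in Ioc 0 t, (P {ω | s < T ω ∧ s ≤ C ω})⁻¹ ∂(μt 0))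
    (𝒥 : Set ℝ) (h𝒥 : 𝒥 = {t | 0 ≤ t ∧ 0 < P {ω | t < Tt ω}})
    -- pointwise independence in hazard form
    (hident : ∀ j, 1 ≤ j → j ≤ d → ∀ t ∈ 𝒥, Ht j t = H j t)
    (hcens : ∀ t ∈ 𝒥, Hc0 t = H0 t) :
    -- conclusion: P(T̃ > t) = P(T > t)·P(C > t) and P(T > t, C ≥ t) = P(T > t)·P(C ≥ t)
    ∀ t ∈ 𝒥,
      P {ω | t < Tt ω} = P {ω | t < T ω} * P {ω | t < C ω} ∧
      P {ω | t < T ω ∧ t ≤ C ω} = P {ω | t < T ω} * P {ω | t ≤ C ω} := by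
  obtain rfl := funext hTtdef
  obtain rfl := funext hDtdef
  obtain rfl := funext hμ
  obtain rfl := funext hμt
  obtain rfl := funext fun j => funext (hH j)
  obtain rfl := funext fun j => funext (hHt j)
  obtain rfl := funext hH0
  obtain rfl := funext hHc0
  subst hνC h𝒥
  rintro t ⟨ht, htpos⟩
  have hJ : ∀ u ∈ Icc 0 t, 0 ≤ u ∧ 0 < P {ω | u < min (T ω) (C ω)} := fun u hu =>
    ⟨hu.1, htpos.trans_le (measure_mono fun _ hω => hu.2.trans_lt hω)⟩
  simp only [lt_min_iff] at htpos ⊢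
  refine product_structure_of_hazard_eq P hT hC hTpos hCpos ht htpos.ne' (fun u hu => ?_)
    fun u hu => ?_
  · rw [observedEventHazard_Ioc_eq_sum P hT hC hD hDrange, hazardMeasure_Ioc_eq_sum P hT hD
      (Finset.Icc 1 d) fun ω => Finset.mem_Icc.mpr (hDrange ω)]
    exact Finset.sum_congr rfl fun j hj =>
      hident j (Finset.mem_Icc.mp hj).1 (Finset.mem_Icc.mp hj).2 u (hJ u hu)
  · rw [observedCensoringHazard_Ioc_eq P hT hC fun ω => (hDrange ω).1, hazardMeasure,
      withDensity_apply _ measurableSet_Ioc]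
    exact hcens u (hJ u hu)

/-- Pointwise independence (in hazard form) implies the product structure
`S̃(t) = S(t)·K(t)` and `Š(t) = S(t)·K(t−)` on `𝒥`. -/
theorem pointwise_independence_implies_product_structure
    {Ω : Type*} [m0 : MeasurableSpace Ω] (P : Measure Ω) [IsProbabilityMeasure P]
    (d : ℕ) (hd : 1 ≤ d)
    (T C : Ω → ℝ) (D : Ω → ℕ)
    (hT : Measurable T) (hC : Measurable C) (hD : Measurable D)
    (hTpos : ∀ᵐ ω ∂P, 0 < T ω) (hCpos : ∀ᵐ ω ∂P, 0 < C ω)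
    (hDrange : ∀ ω, 1 ≤ D ω ∧ D ω ≤ d)
    (Tt : Ω → ℝ) (hTtdef : ∀ ω, Tt ω = min (T ω) (C ω))
    (Dt : Ω → ℕ) (hDtdef : ∀ ω, Dt ω = if T ω ≤ C ω then D ω else 0)
    (μ μt : ℕ → Measure ℝ)
    (hμ : ∀ j, μ j = Measure.map T (P.restrict {ω | D ω = j}))
    (hμt : ∀ j, μt j = Measure.map Tt (P.restrict {ω | Dt ω = j}))
    (νC : Measure ℝ) (hνC : νC = Measure.map C P)
    (H Ht : ℕ → ℝ → ℝ≥0∞)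
    (hH : ∀ j t, H j t = ∫⁻ s in Ioc 0 t, (P {ω | s ≤ T ω})⁻¹ ∂(μ j))
    (hHt : ∀ j t, Ht j t = ∫⁻ s in Ioc 0 t, (P {ω | s ≤ Tt ω})⁻¹ ∂(μt j))
    (H0 : ℝ → ℝ≥0∞) (hH0 : ∀ t, H0 t = ∫⁻ s in Ioc 0 t, (P {ω | s ≤ C ω})⁻¹ ∂νC)
    (Hc0 : ℝ → ℝ≥0∞)
    (hHc0 : ∀ t, Hc0 t = ∫⁻ s in Ioc 0 t, (P {ω | s < T ω ∧ s ≤ C ω})⁻¹ ∂(μt 0))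
    (𝒥 : Set ℝ) (h𝒥 : 𝒥 = {t | 0 ≤ t ∧ 0 < P {ω | t < Tt ω}})
    -- pointwise independence in hazard form
    (hident : ∀ j, 1 ≤ j → j ≤ d → ∀ t ∈ 𝒥, Ht j t = H j t)
    (hcens : ∀ t ∈ 𝒥, Hc0 t = H0 t) :
    -- conclusion: P(T̃ > t) = P(T > t)·P(C > t) and P(T > t, C ≥ t) = P(T > t)·P(C ≥ t)
    ∀ t ∈ 𝒥,
      P {ω | t < Tt ω} = P {ω | t < T ω} * P {ω | t < C ω} ∧
      P {ω | t < T ω ∧ t ≤ C ω} = P {ω | t < T ω} * P {ω | t ≤ C ω} :=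
  pointwise_independence_implies_product_structure_general (m0 := m0) P d T C D hT hC hD hTpos hCpos
    hDrange Tt hTtdef Dt hDtdef μ μt hμ hμt νC hνC H Ht hH hHt H0 hH0 Hc0 hHc0 𝒥 h𝒥 hident hcens
end

section
/- For all t ∈ 𝒥, the identity P(T̃ < t | T ≥ t) = B(t) + ∫_{[0,t)} (S̃(s−)/S(s)) ν̃(ds) − ∫_{[0,t)} (S̃(s−)/S(s)) ν(ds) holds, where B(t) = ∫_{[0,t)} S(s)^{-1} μ̃₀(ds), ν̃ is the Borel measure ν̃(A) = Σ_{j=1}^d ∫_A S̃(s−)^{-1} μ̃_j(ds) (the observed all-cause hazard measure), and ν is the Borel measure ν(A) = Σ_{j=1}^d ∫_A S(s−)^{-1} μ_j(ds) (the underlying all-cause hazard measure). (The conditional probability is well defined since P(T ≥ t) ≥ S̃(t) > 0 for t ∈ 𝒥, and all integrals are finite.) -/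
/-!
Write `Q`, `Q̃` for the laws of `T`, `T̃` and `S = Q (Ioi ·)`, `S̃ = Q̃ (Ioi ·)`. Since `T̃ ≤ T`,
`P(T̃ < t ≤ T) = S(t-) - S̃(t-)`, so the left side is `1 - S̃(t-) / S(t-)`. The density `S̃(s-)⁻¹`
of `ν̃` cancels the factor `S̃(s-)`, and `μ̃₀ + ∑ⱼ μ̃ⱼ = Q̃`, so `B(t) + ∫ S̃(s-)/S(s) dν̃` is
`∫_{[0,t)} S(s)⁻¹ dQ̃(s)`; likewise `∫ S̃(s-)/S(s) dν = ∫_{[0,t)} S̃(u-) / (S(u) S(u-)) dQ(u)`.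
The identity is then integration by parts for `S̃(t-) / S(t-)` against the chain rule
`d(1/S)(u) = dQ(u) / (S(u-) S(u))`. The chain rule is obtained without Stieltjes calculus:
expand `1/S(u) = ∑ₙ F(u)ⁿ` with `F = 1 - S` and integrate the discrete derivative
`∑_{p+q=n} F(u-)ᵖ F(u)^q` of `F^{n+1}`, whose `dQ`-integral over a lower set `A` is `Q(A)^{n+1}`
by induction on `n` and Fubini.
-/

open MeasureTheory Set ENNReal Finset.HasAntidiagonal

lemma measurable_measure_Iio (ρ : Measure ℝ) : Measurable fun u => ρ (Iio u) :=
  Monotone.measurable fun _ _ h => measure_mono (Iio_subset_Iio h)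

lemma measurable_measure_Iic (ρ : Measure ℝ) : Measurable fun u => ρ (Iic u) :=
  Monotone.measurable fun _ _ h => measure_mono (Iic_subset_Iic.2 h)

lemma measurable_measure_Ioi (ρ : Measure ℝ) : Measurable fun u => ρ (Ioi u) :=
  Antitone.measurable fun _ _ h => measure_mono (Ioi_subset_Ioi h)

lemma measurable_measure_Ici (ρ : Measure ℝ) : Measurable fun u => ρ (Ici u) :=
  Antitone.measurable fun _ _ h => measure_mono (Ici_subset_Ici.2 h)

lemma sum_antidiagonal_succ_pow_mul_pow {R : Type*} [CommSemiring R] (a b : R) (n : ℕ) :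
    ∑ p ∈ antidiagonal (n + 1), a ^ p.1 * b ^ p.2
      = a ^ (n + 1) + b * ∑ p ∈ antidiagonal n, a ^ p.1 * b ^ p.2 := by
  rw [Finset.Nat.antidiagonal_succ', Finset.sum_cons, Finset.sum_map, Finset.mul_sum]
  simp [pow_succ, mul_comm, mul_left_comm]

lemma ENNReal.tsum_mul_tsum_eq_tsum_sum_antidiagonal (f g : ℕ → ℝ≥0∞) :
    (∑' k, f k) * ∑' l, g l = ∑' n, ∑ p ∈ antidiagonal n, f p.1 * g p.2 := by
  calc (∑' k, f k) * ∑' l, g l = ∑' p : ℕ × ℕ, f p.1 * g p.2 := by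
        rw [ENNReal.tsum_prod (f := fun k l => f k * g l), ← ENNReal.tsum_mul_right]
        simp only [ENNReal.tsum_mul_left]
    _ = ∑' x : Σ n : ℕ, antidiagonal n, f (x.2 : ℕ × ℕ).1 * g (x.2 : ℕ × ℕ).2 :=
        (sigmaAntidiagonalEquivProd.tsum_eq (fun p : ℕ × ℕ => f p.1 * g p.2)).symm
    _ = ∑' n, ∑ p ∈ antidiagonal n, f p.1 * g p.2 := by
        rw [ENNReal.tsum_sigma']
        exact tsum_congr fun n => Finset.tsum_subtype _ (fun p : ℕ × ℕ => f p.1 * g p.2)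

lemma lintegral_measure_slice_mul {α β : Type*} [MeasurableSpace α] [MeasurableSpace β]
    {μ : Measure α} {ν : Measure β} [SFinite μ] [SFinite ν] {r : Set (α × β)}
    (hr : MeasurableSet r) {f : α → ℝ≥0∞} (hf : Measurable f) :
    ∫⁻ u, ν {v | (u, v) ∈ r} * f u ∂μ = ∫⁻ v, ∫⁻ u in {u | (u, v) ∈ r}, f u ∂μ ∂ν := by
  let F := r.indicator fun p : α × β => f p.1
  calc ∫⁻ u, ν {v | (u, v) ∈ r} * f u ∂μ = ∫⁻ u, ∫⁻ v, F (u, v) ∂ν ∂μ := by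
        refine lintegral_congr fun u => ?_
        rw [mul_comm,
          ← lintegral_indicator_const (s := {v | (u, v) ∈ r}) (measurable_prodMk_left hr)]
        rfl
    _ = ∫⁻ v, ∫⁻ u, F (u, v) ∂μ ∂ν :=
        lintegral_lintegral_swap ((hf.comp measurable_fst).indicator hr).aemeasurable
    _ = ∫⁻ v, ∫⁻ u in {u | (u, v) ∈ r}, f u ∂μ ∂ν := by
        refine lintegral_congr fun v => ?_
        rw [← lintegral_indicator (s := {u | (u, v) ∈ r}) (measurable_prodMk_right hr)]
        rfl

lemma withDensity_finset_sum_measure {α ι : Type*} [MeasurableSpace α] (s : Finset ι)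
    (μ : ι → Measure α) (f : α → ℝ≥0∞) :
    (∑ i ∈ s, μ i).withDensity f = ∑ i ∈ s, (μ i).withDensity f := by
  classical
  induction s using Finset.induction_on with
  | empty => simp
  | insert i s hi ih => rw [Finset.sum_insert hi, Finset.sum_insert hi, withDensity_add_measure, ih]

lemma restrict_Ico_eq_restrict_Iio {α : Type*} [MeasurableSpace α] [LinearOrder α] {μ : Measure α}
    {a t : α} (h : μ (Iio a) = 0) : μ.restrict (Ico a t) = μ.restrict (Iio t) := by
  refine Measure.restrict_congr_set (ae_eq_set.2 ⟨?_, ?_⟩)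
  · rw [sdiff_eq_empty.2 Ico_subset_Iio_self, measure_empty]
  · exact measure_mono_null (fun x hx => not_le.1 fun hax => hx.2 ⟨hax, hx.1⟩) h

/-- The density of `d(F ^ (n + 1))` with respect to `dF`, where `F u = ρ (Iic u)`: it is
`(n + 1) F(u) ^ n` where `F` is continuous and `(F(u) ^ (n + 1) - F(u-) ^ (n + 1)) / (F(u) - F(u-))`
at an atom. -/
noncomputable def powStieltjesDensity (ρ : Measure ℝ) (n : ℕ) (u : ℝ) : ℝ≥0∞ :=
  ∑ p ∈ antidiagonal n, ρ (Iio u) ^ p.1 * ρ (Iic u) ^ p.2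

lemma measurable_powStieltjesDensity (ρ : Measure ℝ) (n : ℕ) :
    Measurable (powStieltjesDensity ρ n) :=
  Finset.measurable_sum _ fun _ _ =>
    ((measurable_measure_Iio ρ).pow_const _).mul ((measurable_measure_Iic ρ).pow_const _)

lemma powStieltjesDensity_restrict {ρ : Measure ℝ} {A : Set ℝ} (hA : IsLowerSet A) {u : ℝ}
    (hu : u ∈ A) (n : ℕ) : powStieltjesDensity (ρ.restrict A) n u = powStieltjesDensity ρ n u := by
  simp only [powStieltjesDensity, Measure.restrict_apply measurableSet_Iio,
    Measure.restrict_apply measurableSet_Iic,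
    inter_eq_self_of_subset_left (show Iio u ⊆ A from fun _ hx => hA (le_of_lt hx) hu),
    inter_eq_self_of_subset_left (show Iic u ⊆ A from fun _ hx => hA hx hu)]

lemma setLIntegral_powStieltjesDensity_eq_lintegral_restrict {ρ : Measure ℝ} {A : Set ℝ}
    (hA : IsLowerSet A) (n : ℕ) :
    ∫⁻ u in A, powStieltjesDensity ρ n u ∂ρ
      = ∫⁻ u, powStieltjesDensity (ρ.restrict A) n u ∂(ρ.restrict A) :=
  setLIntegral_congr_fun hA.ordConnected.measurableSet fun _ hu =>
    (powStieltjesDensity_restrict hA hu n).symm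

theorem lintegral_powStieltjesDensity (ρ : Measure ℝ) [IsFiniteMeasure ρ] (n : ℕ) :
    ∫⁻ u, powStieltjesDensity ρ n u ∂ρ = ρ univ ^ (n + 1) := by
  induction n generalizing ρ with
  | zero => simp [powStieltjesDensity]
  | succ n ih =>
    have hsig := measurable_powStieltjesDensity ρ n
    have hIoi : Measurable fun u => ρ (Ioi u) * powStieltjesDensity ρ n u :=
      (measurable_measure_Ioi ρ).mul hsig
    have hswap : ∫⁻ u, ρ (Iio u) ^ (n + 1) ∂ρ = ∫⁻ u, ρ (Ioi u) * powStieltjesDensity ρ n u ∂ρ := by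
      refine Eq.symm <| (lintegral_measure_slice_mul (r := {p : ℝ × ℝ | p.1 < p.2})
        (measurableSet_lt measurable_fst measurable_snd) hsig).trans (lintegral_congr fun v => ?_)
      exact (setLIntegral_powStieltjesDensity_eq_lintegral_restrict (isLowerSet_Iio v) n).trans
        (by rw [ih, Measure.restrict_apply_univ])
    have hsplit : ∀ u, ρ (Iic u) + ρ (Ioi u) = ρ univ := fun u => by
      rw [← measure_union (Iic_disjoint_Ioi le_rfl) measurableSet_Ioi, Iic_union_Ioi]
    calc ∫⁻ u, powStieltjesDensity ρ (n + 1) u ∂ρ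
        = ∫⁻ u, ρ (Iio u) ^ (n + 1) + ρ (Iic u) * powStieltjesDensity ρ n u ∂ρ := by
          simp only [powStieltjesDensity, sum_antidiagonal_succ_pow_mul_pow]
      _ = ∫⁻ u, (ρ (Iic u) + ρ (Ioi u)) * powStieltjesDensity ρ n u ∂ρ := by
          rw [lintegral_add_left ((measurable_measure_Iio ρ).pow_const _), hswap,
            ← lintegral_add_left hIoi]
          exact lintegral_congr fun u => by ring
      _ = ρ univ ^ (n + 1 + 1) := by
          simp only [hsplit]
          rw [lintegral_const_mul _ hsig, ih, pow_succ' _ (n + 1)]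

theorem setLIntegral_powStieltjesDensity (ρ : Measure ℝ) [IsFiniteMeasure ρ] {A : Set ℝ}
    (hA : IsLowerSet A) (n : ℕ) :
    ∫⁻ u in A, powStieltjesDensity ρ n u ∂ρ = ρ A ^ (n + 1) := by
  rw [setLIntegral_powStieltjesDensity_eq_lintegral_restrict hA, lintegral_powStieltjesDensity,
    Measure.restrict_apply_univ]

/-- The chain rule `d(1/S)(u) = dQ(u) / (S(u-) S(u))` for the survival function `S u = Q (Ioi u)`,
integrated over a lower set. -/
theorem inv_measure_compl_eq_one_add (Q : Measure ℝ) [IsProbabilityMeasure Q] {A : Set ℝ}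
    (hA : IsLowerSet A) :
    (Q Aᶜ)⁻¹ = 1 + ∫⁻ u in A, (Q (Ioi u))⁻¹ * (Q (Ici u))⁻¹ ∂Q := by
  have hgeom : ∀ {B : Set ℝ}, MeasurableSet B → (Q Bᶜ)⁻¹ = ∑' n, Q B ^ n := fun hB => by
    rw [prob_compl_eq_one_sub hB, ENNReal.tsum_geometric]
  have hdensity : ∀ u, (Q (Ioi u))⁻¹ * (Q (Ici u))⁻¹ = ∑' n, powStieltjesDensity Q n u := by
    intro u
    rw [← compl_Iic, ← compl_Iio, hgeom measurableSet_Iic, hgeom measurableSet_Iio, mul_comm,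
      ENNReal.tsum_mul_tsum_eq_tsum_sum_antidiagonal]
    rfl
  calc (Q Aᶜ)⁻¹ = 1 + ∑' n, Q A ^ (n + 1) := by
        rw [hgeom hA.ordConnected.measurableSet, tsum_eq_zero_add' ENNReal.summable, pow_zero]
    _ = 1 + ∫⁻ u in A, ∑' n, powStieltjesDensity Q n u ∂Q := by
        rw [lintegral_tsum fun n => (measurable_powStieltjesDensity Q n).aemeasurable]
        simp only [setLIntegral_powStieltjesDensity Q hA]
    _ = 1 + ∫⁻ u in A, (Q (Ioi u))⁻¹ * (Q (Ici u))⁻¹ ∂Q := by simp only [hdensity]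

/-- Integration by parts for `Qt (Ici t) / Q (Ici t)`. -/
theorem setLIntegral_inv_measure_Ioi_add (Q Qt : Measure ℝ) [IsProbabilityMeasure Q] [SFinite Qt]
    (t : ℝ) :
    ∫⁻ s in Iio t, (Q (Ioi s))⁻¹ ∂Qt + Qt (Ici t) * (Q (Ici t))⁻¹
      = Qt univ + ∫⁻ u in Iio t, Qt (Ici u) * ((Q (Ioi u))⁻¹ * (Q (Ici u))⁻¹) ∂Q := by
  have hmeas : Measurable fun u => (Q (Ioi u))⁻¹ * (Q (Ici u))⁻¹ :=
    (measurable_measure_Ioi Q).inv.mul (measurable_measure_Ici Q).inv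
  calc ∫⁻ s in Iio t, (Q (Ioi s))⁻¹ ∂Qt + Qt (Ici t) * (Q (Ici t))⁻¹
      = ∫⁻ y, (Q (Iic y ∩ Iio t)ᶜ)⁻¹ ∂Qt := by
        rw [← lintegral_add_compl (fun y => (Q (Iic y ∩ Iio t)ᶜ)⁻¹) measurableSet_Iio, compl_Iio]
        congr 1
        · refine setLIntegral_congr_fun measurableSet_Iio fun y hy => ?_
          rw [inter_eq_self_of_subset_left (Iic_subset_Iio.2 hy), compl_Iic]
        · rw [mul_comm, ← setLIntegral_const]
          refine setLIntegral_congr_fun measurableSet_Ici fun y hy => ?_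
          rw [inter_eq_self_of_subset_right (Iio_subset_Iic hy), compl_Iio]
    _ = ∫⁻ y, 1 + ∫⁻ u in Iic y ∩ Iio t, (Q (Ioi u))⁻¹ * (Q (Ici u))⁻¹ ∂Q ∂Qt := by
        exact lintegral_congr fun y =>
          inv_measure_compl_eq_one_add Q ((isLowerSet_Iic y).inter (isLowerSet_Iio t))
    _ = Qt univ + ∫⁻ y, ∫⁻ u in Iic y, (Q (Ioi u))⁻¹ * (Q (Ici u))⁻¹ ∂(Q.restrict (Iio t)) ∂Qt := by
        rw [lintegral_add_left measurable_const, lintegral_one]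
        refine congrArg _ (lintegral_congr fun y => ?_)
        rw [Measure.restrict_restrict measurableSet_Iic]
    _ = Qt univ + ∫⁻ u in Iio t, Qt (Ici u) * ((Q (Ioi u))⁻¹ * (Q (Ici u))⁻¹) ∂Q := by
        congr 1
        exact (lintegral_measure_slice_mul (r := {p : ℝ × ℝ | p.1 ≤ p.2})
          (measurableSet_le measurable_fst measurable_snd) hmeas).symm

lemma setLIntegral_inv_measure_Ioi_lt_top (Q Qt : Measure ℝ) [IsFiniteMeasure Qt] {t : ℝ}
    (ht : 0 < Q (Ioi t)) : ∫⁻ s in Iio t, (Q (Ioi s))⁻¹ ∂Qt < ∞ := by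
  have hinv : (Q (Ioi t))⁻¹ ≠ ∞ := inv_ne_top.2 ht.ne'
  refine setLIntegral_lt_top_of_le_nnreal (measure_ne_top _ _)
    ⟨(Q (Ioi t))⁻¹.toNNReal, fun s hs => ?_⟩
  rw [coe_toNNReal hinv]
  exact ENNReal.inv_le_inv.2 (measure_mono (Ioi_subset_Ioi (le_of_lt hs)))

lemma setLIntegral_measure_Ici_mul_inv_lt_top (Q Qt : Measure ℝ) [IsFiniteMeasure Q]
    [IsProbabilityMeasure Qt] {t : ℝ} (ht : 0 < Q (Ioi t)) :
    ∫⁻ u in Iio t, Qt (Ici u) * ((Q (Ioi u))⁻¹ * (Q (Ici u))⁻¹) ∂Q < ∞ := by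
  have hinv : (Q (Ioi t))⁻¹ ≠ ∞ := inv_ne_top.2 ht.ne'
  refine setLIntegral_lt_top_of_le_nnreal (measure_ne_top _ _)
    ⟨((Q (Ioi t))⁻¹ * (Q (Ioi t))⁻¹).toNNReal, fun u hu => ?_⟩
  rw [coe_toNNReal (mul_ne_top hinv hinv), ← one_mul ((Q (Ioi t))⁻¹ * _)]
  exact mul_le_mul' prob_le_one (mul_le_mul'
    (ENNReal.inv_le_inv.2 (measure_mono (Ioi_subset_Ioi (le_of_lt hu))))
    (ENNReal.inv_le_inv.2
      (measure_mono (Ioi_subset_Ici_self.trans (Ici_subset_Ici.2 (le_of_lt hu))))))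

theorem toReal_sub_div_measure_Ici (Q Qt : Measure ℝ) [IsProbabilityMeasure Q]
    [IsProbabilityMeasure Qt] {t : ℝ} (hdom : Qt (Ici t) ≤ Q (Ici t)) (ht : 0 < Q (Ioi t)) :
    ((Q (Ici t) - Qt (Ici t)) / Q (Ici t)).toReal
      = (∫⁻ s in Iio t, (Q (Ioi s))⁻¹ ∂Qt).toReal
        - (∫⁻ u in Iio t, Qt (Ici u) * ((Q (Ioi u))⁻¹ * (Q (Ici u))⁻¹) ∂Q).toReal := by
  have hQ0 : Q (Ici t) ≠ 0 := (ht.trans_le (measure_mono Ioi_subset_Ici_self)).ne'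
  have hpos : 0 < (Q (Ici t)).toReal := toReal_pos hQ0 (measure_ne_top _ _)
  have key := congrArg ENNReal.toReal (setLIntegral_inv_measure_Ioi_add Q Qt t)
  rw [toReal_add (setLIntegral_inv_measure_Ioi_lt_top Q Qt ht).ne
      (mul_ne_top (measure_ne_top _ _) (inv_ne_top.2 hQ0)),
    toReal_add (measure_ne_top _ _) (setLIntegral_measure_Ici_mul_inv_lt_top Q Qt ht).ne,
    measure_univ, toReal_one, toReal_mul, toReal_inv] at key
  rw [toReal_div, toReal_sub_of_le hdom (measure_ne_top _ _), sub_div, div_self hpos.ne',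
    div_eq_mul_inv]
  linarith

lemma setLIntegral_add_setLIntegral_withDensity_eq {Q Qt μ₀ M : Measure ℝ} [IsFiniteMeasure Qt]
    (hQt : Qt = μ₀ + M) (h0 : Qt (Iio 0) = 0) {t : ℝ} (ht : 0 < Qt (Ioi t)) :
    ∫⁻ s in Ico 0 t, (Q (Ioi s))⁻¹ ∂μ₀
      + ∫⁻ s in Ico 0 t, Qt (Ici s) / Q (Ioi s) ∂(M.withDensity fun s => (Qt (Ici s))⁻¹)
      = ∫⁻ s in Iio t, (Q (Ioi s))⁻¹ ∂Qt := by
  have hcancel : ∫⁻ s in Ico 0 t, Qt (Ici s) / Q (Ioi s) ∂(M.withDensity fun s => (Qt (Ici s))⁻¹)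
      = ∫⁻ s in Ico 0 t, (Q (Ioi s))⁻¹ ∂M := by
    rw [setLIntegral_withDensity_eq_setLIntegral_mul _ (f := fun s => (Qt (Ici s))⁻¹)
      (g := fun s => Qt (Ici s) / Q (Ioi s)) (measurable_measure_Ici Qt).inv
      ((measurable_measure_Ici Qt).div (measurable_measure_Ioi Q)) measurableSet_Ico]
    refine setLIntegral_congr_fun measurableSet_Ico fun s hs => ?_
    have hpos : Qt (Ici s) ≠ 0 := (ht.trans_le (measure_mono (Ioi_subset_Ici hs.2.le))).ne'
    rw [Pi.mul_apply, div_eq_mul_inv, ENNReal.inv_mul_cancel_left hpos (measure_ne_top _ _)]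
  rw [hcancel, ← lintegral_add_measure, ← Measure.restrict_add, ← hQt,
    restrict_Ico_eq_restrict_Iio h0]

lemma setLIntegral_withDensity_inv_measure_Ici_eq {Q Qt : Measure ℝ} (h0 : Q (Iio 0) = 0) (t : ℝ) :
    ∫⁻ s in Ico 0 t, Qt (Ici s) / Q (Ioi s) ∂(Q.withDensity fun s => (Q (Ici s))⁻¹)
      = ∫⁻ u in Iio t, Qt (Ici u) * ((Q (Ioi u))⁻¹ * (Q (Ici u))⁻¹) ∂Q := by
  rw [setLIntegral_withDensity_eq_setLIntegral_mul _ (f := fun s => (Q (Ici s))⁻¹)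
    (g := fun s => Qt (Ici s) / Q (Ioi s)) (measurable_measure_Ici Q).inv
    ((measurable_measure_Ici Qt).div (measurable_measure_Ioi Q)) measurableSet_Ico,
    restrict_Ico_eq_restrict_Iio h0]
  exact lintegral_congr fun u => by simp only [Pi.mul_apply, div_eq_mul_inv]; ring

section Laws

variable {Ω : Type*} [MeasurableSpace Ω] {P : Measure Ω}

lemma measure_setOf_lt_eq_map {X : Ω → ℝ} (hX : Measurable X) (s : ℝ) :
    P {ω | s < X ω} = P.map X (Ioi s) :=
  (Measure.map_apply hX measurableSet_Ioi).symm

lemma measure_setOf_le_eq_map {X : Ω → ℝ} (hX : Measurable X) (s : ℝ) :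
    P {ω | s ≤ X ω} = P.map X (Ici s) :=
  (Measure.map_apply hX measurableSet_Ici).symm

lemma map_Iio_eq_zero {X : Ω → ℝ} (hX : Measurable X) {a : ℝ} (h : ∀ᵐ ω ∂P, a ≤ X ω) :
    P.map X (Iio a) = 0 := by
  rw [Measure.map_apply hX measurableSet_Iio]
  exact measure_eq_zero_iff_ae_notMem.2 (h.mono fun _ h' => not_lt.2 h')

lemma map_eq_sum_map_restrict {α ι : Type*} [MeasurableSpace α] [MeasurableSpace ι]
    [MeasurableSingletonClass ι] {X : Ω → α} {D : Ω → ι} (hX : Measurable X) (hD : Measurable D)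
    (s : Finset ι) (hs : ∀ ω, D ω ∈ s) :
    P.map X = ∑ j ∈ s, (P.restrict {ω | D ω = j}).map X := by
  ext A hA
  have hfib : ∀ j, (P.restrict {ω | D ω = j}).map X A = P.restrict (X ⁻¹' A) (D ⁻¹' {j}) := by
    intro j
    rw [Measure.map_apply hX hA, Measure.restrict_apply (hX hA),
      Measure.restrict_apply (hD (measurableSet_singleton j)), inter_comm]
    rfl
  rw [Measure.finsetSum_apply, Finset.sum_congr rfl fun j _ => hfib j,
    sum_measure_preimage_singleton s fun j _ => hD (measurableSet_singleton j),
    show D ⁻¹' s = univ from eq_univ_of_forall hs, Measure.restrict_apply_univ,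
    Measure.map_apply hX hA]

lemma measure_lt_and_le_eq_sub [IsFiniteMeasure P] {X Y : Ω → ℝ} (hX : Measurable X)
    (hXY : X ≤ᵐ[P] Y) (t : ℝ) :
    P {ω | X ω < t ∧ t ≤ Y ω} = P {ω | t ≤ Y ω} - P {ω | t ≤ X ω} := by
  refine ENNReal.eq_sub_of_add_eq (measure_ne_top _ _) ?_
  have hdisj : Disjoint {ω | X ω < t ∧ t ≤ Y ω} {ω | t ≤ X ω} :=
    disjoint_left.2 fun _ h h' => not_le.2 h.1 h'
  rw [← measure_union hdisj (measurableSet_le measurable_const hX)]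
  refine measure_congr (Filter.eventuallyEq_set.2 (hXY.mono fun ω h => ?_))
  simp only [mem_union, mem_ofPred_eq]
  constructor
  · rintro (h1 | h2)
    exacts [h1.2, h2.trans h]
  · exact fun h1 => (lt_or_ge (X ω) t).imp (⟨·, h1⟩) id

end Laws

theorem prob_vs_B_general
    {Ω : Type*} [m0 : MeasurableSpace Ω] (P : Measure Ω) [IsProbabilityMeasure P]
    (d : ℕ)
    (T Tt : Ω → ℝ) (D Dt : Ω → ℕ)
    (hT : Measurable T) (hTt : Measurable Tt)
    (hD : Measurable D) (hDt : Measurable Dt)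
    (hpos : ∀ᵐ ω ∂P, 0 < Tt ω ∧ Tt ω ≤ T ω)
    (hDrange : ∀ ω, 1 ≤ D ω ∧ D ω ≤ d)
    (hDtrange : ∀ ω, Dt ω ≤ d)
    (μ μt : ℕ → Measure ℝ)
    (hμ : ∀ j, μ j = Measure.map T (P.restrict {ω | D ω = j}))
    (hμt : ∀ j, μt j = Measure.map Tt (P.restrict {ω | Dt ω = j}))
    (𝒥 : Set ℝ) (h𝒥 : 𝒥 = {t | 0 ≤ t ∧ 0 < P {ω | t < Tt ω}})
    -- B(t) = ∫_{[0,t)} S(s)⁻¹ μ̃₀(ds)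
    (B : ℝ → ℝ≥0∞)
    (hB : ∀ t, B t = ∫⁻ s in Ico 0 t, (P {ω | s < T ω})⁻¹ ∂(μt 0))
    -- the underlying and observed all-cause hazard measures ν and ν̃
    (ν νt : Measure ℝ)
    (hν : ν = ∑ j ∈ Finset.Icc 1 d, (μ j).withDensity (fun s => (P {ω | s ≤ T ω})⁻¹))
    (hνt : νt = ∑ j ∈ Finset.Icc 1 d, (μt j).withDensity (fun s => (P {ω | s ≤ Tt ω})⁻¹)) :
    ∀ t ∈ 𝒥,
      (P {ω | Tt ω < t ∧ t ≤ T ω} / P {ω | t ≤ T ω}).toReal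
        = (B t).toReal
          + (∫⁻ s in Ico 0 t, P {ω | s ≤ Tt ω} / P {ω | s < T ω} ∂νt).toReal
          - (∫⁻ s in Ico 0 t, P {ω | s ≤ Tt ω} / P {ω | s < T ω} ∂ν).toReal := by
  subst h𝒥
  rintro t ⟨-, htpos⟩
  have hTtT : Tt ≤ᵐ[P] T := hpos.mono fun _ h => h.2
  have hdom : P {ω | t ≤ Tt ω} ≤ P {ω | t ≤ T ω} :=
    measure_mono_ae (hTtT.mono fun _ h h' => le_trans h' h)
  have hS : 0 < P {ω | t < T ω} :=
    htpos.trans_le (measure_mono_ae (hTtT.mono fun _ h h' => lt_of_lt_of_le h' h))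
  have hQ : P.map T = ∑ j ∈ Finset.Icc 1 d, μ j := by
    rw [map_eq_sum_map_restrict hT hD _ fun ω => Finset.mem_Icc.2 (hDrange ω)]
    simp only [hμ]
  have hQt : P.map Tt = μt 0 + ∑ j ∈ Finset.Icc 1 d, μt j := by
    have hrange : ∀ ω, Dt ω ∈ insert 0 (Finset.Icc 1 d) := fun ω => by
      have := hDtrange ω
      simp only [Finset.mem_insert, Finset.mem_Icc]
      omega
    rw [map_eq_sum_map_restrict hTt hDt _ hrange, Finset.sum_insert (by simp)]
    simp only [hμt]
  have := Measure.isProbabilityMeasure_map (μ := P) hT.aemeasurable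
  have := Measure.isProbabilityMeasure_map (μ := P) hTt.aemeasurable
  rw [measure_lt_and_le_eq_sub hTt hTtT t]
  simp only [measure_setOf_lt_eq_map hT, measure_setOf_le_eq_map hT, measure_setOf_lt_eq_map hTt,
    measure_setOf_le_eq_map hTt] at hB hν hνt hdom hS htpos ⊢
  have hobs := setLIntegral_add_setLIntegral_withDensity_eq (Q := P.map T) hQt
    (map_Iio_eq_zero hTt (hpos.mono fun _ h => h.1.le)) htpos
  have hfin := hobs ▸ setLIntegral_inv_measure_Ioi_lt_top (P.map T) (P.map Tt) hS
  rw [hB, hνt, hν, ← withDensity_finset_sum_measure, ← withDensity_finset_sum_measure, ← hQ,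
    ← toReal_add (add_lt_top.1 hfin).1.ne (add_lt_top.1 hfin).2.ne, hobs,
    setLIntegral_withDensity_inv_measure_Ici_eq
      (map_Iio_eq_zero hT (hpos.mono fun _ h => (h.1.trans_le h.2).le))]
  exact toReal_sub_div_measure_Ici _ _ hdom hS

/-- Appendix identity (eq. (prob_vs_B)):
`P(T̃ < t | T ≥ t) = B(t) + ∫_{[0,t)} (S̃(s−)/S(s)) ν̃(ds) − ∫_{[0,t)} (S̃(s−)/S(s)) ν(ds)`
for all `t ∈ 𝒥`. -/
theorem prob_vs_B
    {Ω : Type*} [m0 : MeasurableSpace Ω] (P : Measure Ω) [IsProbabilityMeasure P]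
    (d : ℕ) (hd : 1 ≤ d)
    (T Tt : Ω → ℝ) (D Dt : Ω → ℕ)
    (hT : Measurable T) (hTt : Measurable Tt)
    (hD : Measurable D) (hDt : Measurable Dt)
    (hpos : ∀ᵐ ω ∂P, 0 < Tt ω ∧ Tt ω ≤ T ω)
    (hDrange : ∀ ω, 1 ≤ D ω ∧ D ω ≤ d)
    (hDtrange : ∀ ω, Dt ω ≤ d)
    (hDD : ∀ᵐ ω ∂P, Dt ω = if Tt ω = T ω then D ω else 0)
    (μ μt : ℕ → Measure ℝ)
    (hμ : ∀ j, μ j = Measure.map T (P.restrict {ω | D ω = j}))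
    (hμt : ∀ j, μt j = Measure.map Tt (P.restrict {ω | Dt ω = j}))
    (𝒥 : Set ℝ) (h𝒥 : 𝒥 = {t | 0 ≤ t ∧ 0 < P {ω | t < Tt ω}})
    -- B(t) = ∫_{[0,t)} S(s)⁻¹ μ̃₀(ds)
    (B : ℝ → ℝ≥0∞)
    (hB : ∀ t, B t = ∫⁻ s in Ico 0 t, (P {ω | s < T ω})⁻¹ ∂(μt 0))
    -- the underlying and observed all-cause hazard measures ν and ν̃
    (ν νt : Measure ℝ)
    (hν : ν = ∑ j ∈ Finset.Icc 1 d, (μ j).withDensity (fun s => (P {ω | s ≤ T ω})⁻¹))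
    (hνt : νt = ∑ j ∈ Finset.Icc 1 d, (μt j).withDensity (fun s => (P {ω | s ≤ Tt ω})⁻¹)) :
    ∀ t ∈ 𝒥,
      (P {ω | Tt ω < t ∧ t ≤ T ω} / P {ω | t ≤ T ω}).toReal
        = (B t).toReal
          + (∫⁻ s in Ico 0 t, P {ω | s ≤ Tt ω} / P {ω | s < T ω} ∂νt).toReal
          - (∫⁻ s in Ico 0 t, P {ω | s ≤ Tt ω} / P {ω | s < T ω} ∂ν).toReal :=
  prob_vs_B_general (m0 := m0) P d T Tt D Dt hT hTt hD hDt hpos hDrange hDtrange μ μt hμ hμt 𝒥 h𝒥 B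
    hB ν νt hν hνt
end

section
/- Fix t ∈ 𝒥 and j ∈ {1,…,d}. Suppose a Borel measurable function a_j : ℝ → [0,1] is given with μ̃_j(A) = ∫_A a_j(s) μ_j(ds) for every Borel set A, and a Borel measurable function g : ℝ → [0,1] is given with P(T ≤ t, D = j, T̃ ∈ A, D̃ = 0) = ∫_A g(s) μ̃₀(ds) for every Borel set A (g is the conditional probability g(s) = P(T ≤ t, D = j | T̃ = s, D̃ = 0)). Then ∫_{(0,t]} (F_j(t | s) − g(s)) μ̃₀(ds) = ∫_{(0,t]} (a_j(s) + B(s) − 1) μ_j(ds), where F_j(t | s) = μ_j((s,t]) / S(s) (well defined since S(s) ≥ S̃(t) > 0 for 0 < s ≤ t, t ∈ 𝒥) and B(s) = ∫_{[0,s)} S(u)^{-1} μ̃₀(du). -/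
open MeasureTheory Set ENNReal

/-!
By Tonelli, `∫_{(0,t]} F_j(t | s) μ̃₀(ds) = ∫_{(0,t]} B dμ_j`: both are the integral of `S(s)⁻¹`
over the triangle `0 < s < u ≤ t` against `μ̃₀(ds) μ_j(du)` (the endpoint `s = 0` carries no
`μ̃₀`-mass since `T̃ > 0`). Moreover `∫_{(0,t]} g dμ̃₀ = P(T ≤ t, D = j, T̃ ≤ t, D̃ = 0)` and
`∫_{(0,t]} a_j dμ_j = μ̃_j((0, t])`, and these add up to `μ_j((0, t])`, because a type-`j` event
in `(0, t]` is either observed or censored before it. Since `S ≥ S̃(t) > 0` on `(-∞, t]`, all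
integrands are bounded, so the identity passes from `ℝ≥0∞` to `ℝ`.
-/

section Triangle

variable {ν κ : Measure ℝ} [SFinite ν] [SFinite κ] {h : ℝ → ℝ≥0∞}

theorem setLIntegral_measure_Ioc_mul_eq_setLIntegral_Ioo (hh : Measurable h) (a t : ℝ) :
    ∫⁻ s in Ioc a t, κ (Ioc s t) * h s ∂ν = ∫⁻ u in Ioc a t, ∫⁻ s in Ioo a u, h s ∂ν ∂κ := by
  set K : Set (ℝ × ℝ) := {p | a < p.1 ∧ p.1 < p.2 ∧ p.2 ≤ t}
  have hK : MeasurableSet K :=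
    (measurableSet_lt measurable_const measurable_fst).inter
      ((measurableSet_lt measurable_fst measurable_snd).inter
        (measurableSet_le measurable_snd measurable_const))
  have slice_fst : ∀ s u, K.indicator (h ∘ Prod.fst) (s, u)
      = (Ioc a t).indicator (fun s => (Ioc s t).indicator (fun _ => h s) u) s := by
    intro s u
    simp only [K, indicator_apply, mem_ofPred_eq, mem_Ioc, Function.comp]
    split_ifs <;> grind
  have slice_snd : ∀ s u, K.indicator (h ∘ Prod.fst) (s, u)
      = (Ioc a t).indicator (fun u => (Ioo a u).indicator h s) u := by
    intro s u
    simp only [K, indicator_apply, mem_ofPred_eq, mem_Ioc, mem_Ioo, Function.comp]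
    split_ifs <;> grind
  rw [← lintegral_indicator measurableSet_Ioc, ← lintegral_indicator measurableSet_Ioc]
  calc ∫⁻ s, (Ioc a t).indicator (fun s => κ (Ioc s t) * h s) s ∂ν
      = ∫⁻ s, ∫⁻ u, K.indicator (h ∘ Prod.fst) (s, u) ∂κ ∂ν := by
        refine lintegral_congr fun s => ?_
        by_cases hs : s ∈ Ioc a t <;>
          simp [slice_fst, hs, lintegral_indicator_const measurableSet_Ioc, mul_comm]
    _ = ∫⁻ u, ∫⁻ s, K.indicator (h ∘ Prod.fst) (s, u) ∂ν ∂κ :=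
        lintegral_lintegral_swap ((hh.comp measurable_fst).indicator hK).aemeasurable
    _ = ∫⁻ u, (Ioc a t).indicator (fun u => ∫⁻ s in Ioo a u, h s ∂ν) u ∂κ := by
        refine lintegral_congr fun u => ?_
        by_cases hu : u ∈ Ioc a t <;>
          simp [slice_snd, hu, lintegral_indicator measurableSet_Ioo]

theorem setLIntegral_measure_Ioc_mul_eq_setLIntegral_Ico (hh : Measurable h) {a : ℝ}
    (ha : ν {a} = 0) (t : ℝ) :
    ∫⁻ s in Ioc a t, κ (Ioc s t) * h s ∂ν = ∫⁻ u in Ioc a t, ∫⁻ s in Ico a u, h s ∂ν ∂κ := by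
  rw [setLIntegral_measure_Ioc_mul_eq_setLIntegral_Ioo hh]
  exact lintegral_congr fun u => setLIntegral_congr (Ioo_ae_eq_Ico' ha)

end Triangle

section BoundedIntegrands

variable {α : Type*} [MeasurableSpace α] {μ : Measure α}

theorem integrable_toReal_of_ae_le [IsFiniteMeasure μ] {f : α → ℝ≥0∞} (hf : AEMeasurable f μ)
    {C : ℝ≥0∞} (hC : C ≠ ∞) (hle : ∀ᵐ x ∂μ, f x ≤ C) : Integrable (fun x => (f x).toReal) μ :=
  Integrable.of_bound hf.ennreal_toReal.aestronglyMeasurable C.toReal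
    (hle.mono fun _ hx => by simpa using ENNReal.toReal_mono hC hx)

theorem integral_toReal_of_ae_le {f : α → ℝ≥0∞} (hf : AEMeasurable f μ) {C : ℝ≥0∞}
    (hC : C ≠ ∞) (hle : ∀ᵐ x ∂μ, f x ≤ C) :
    ∫ x, (f x).toReal ∂μ = (∫⁻ x, f x ∂μ).toReal :=
  integral_toReal hf (hle.mono fun _ hx => hx.trans_lt hC.lt_top)

theorem integrable_of_forall_nonneg_le_one [IsFiniteMeasure μ] {f : α → ℝ}
    (hf : AEStronglyMeasurable f μ) (h : ∀ x, 0 ≤ f x ∧ f x ≤ 1) : Integrable f μ :=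
  Integrable.of_bound hf 1 <| ae_of_all _ fun x => by
    simpa [abs_of_nonneg (h x).1] using (h x).2

end BoundedIntegrands

section InverseSurvival

variable {ν κ : Measure ℝ} {S : ℝ → ℝ≥0∞} {t : ℝ}

theorem measurable_measure_Ioc_div (hS : Antitone S) :
    Measurable fun s => κ (Ioc s t) / S s :=
  (Antitone.measurable fun _ _ h => measure_mono (Ioc_subset_Ioc_left h)).div hS.measurable

theorem measurable_setLIntegral_Ico (f : ℝ → ℝ≥0∞) (a : ℝ) :
    Measurable fun u => ∫⁻ s in Ico a u, f s ∂ν :=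
  Monotone.measurable fun _ _ h => lintegral_mono_set (Ico_subset_Ico_right h)

theorem ae_restrict_measure_Ioc_div_le (hS : Antitone S) (a : ℝ) :
    ∀ᵐ s ∂ν.restrict (Ioc a t), κ (Ioc s t) / S s ≤ κ univ / S t :=
  (ae_restrict_iff' measurableSet_Ioc).2 <| ae_of_all _ fun _ hs =>
    ENNReal.div_le_div (measure_mono (subset_univ _)) (hS hs.2)

theorem ae_restrict_setLIntegral_Ico_inv_le (hS : Antitone S) (a : ℝ) :
    ∀ᵐ u ∂κ.restrict (Ioc a t), ∫⁻ s in Ico a u, (S s)⁻¹ ∂ν ≤ ν univ / S t := by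
  refine (ae_restrict_iff' measurableSet_Ioc).2 <| ae_of_all _ fun u hu => ?_
  calc ∫⁻ s in Ico a u, (S s)⁻¹ ∂ν ≤ ∫⁻ _ in Ico a u, (S t)⁻¹ ∂ν :=
        setLIntegral_mono measurable_const fun _ hs =>
          ENNReal.inv_le_inv.2 (hS (hs.2.le.trans hu.2))
    _ ≤ ν univ / S t := by
        rw [setLIntegral_const, div_eq_mul_inv, mul_comm]; gcongr; exact subset_univ _

theorem integrable_toReal_measure_Ioc_div [IsFiniteMeasure ν] [IsFiniteMeasure κ]
    (hS : Antitone S) (hSt : S t ≠ 0) (a : ℝ) :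
    Integrable (fun s => (κ (Ioc s t) / S s).toReal) (ν.restrict (Ioc a t)) :=
  integrable_toReal_of_ae_le (measurable_measure_Ioc_div hS).aemeasurable
    (div_ne_top (measure_ne_top _ _) hSt) (ae_restrict_measure_Ioc_div_le hS a)

theorem integrable_toReal_setLIntegral_Ico_inv [IsFiniteMeasure ν] [IsFiniteMeasure κ]
    (hS : Antitone S) (hSt : S t ≠ 0) (a : ℝ) :
    Integrable (fun u => (∫⁻ s in Ico a u, (S s)⁻¹ ∂ν).toReal) (κ.restrict (Ioc a t)) :=
  integrable_toReal_of_ae_le (measurable_setLIntegral_Ico _ a).aemeasurable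
    (div_ne_top (measure_ne_top _ _) hSt) (ae_restrict_setLIntegral_Ico_inv_le hS a)

theorem setIntegral_toReal_measure_Ioc_div [IsFiniteMeasure ν] [IsFiniteMeasure κ]
    (hS : Antitone S) (hSt : S t ≠ 0) {a : ℝ}
    (ha : ν {a} = 0) :
    ∫ s in Ioc a t, (κ (Ioc s t) / S s).toReal ∂ν
      = ∫ u in Ioc a t, (∫⁻ s in Ico a u, (S s)⁻¹ ∂ν).toReal ∂κ := by
  rw [integral_toReal_of_ae_le (measurable_measure_Ioc_div hS).aemeasurable
      (div_ne_top (measure_ne_top _ _) hSt) (ae_restrict_measure_Ioc_div_le hS a),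
    integral_toReal_of_ae_le (measurable_setLIntegral_Ico _ a).aemeasurable
      (div_ne_top (measure_ne_top _ _) hSt) (ae_restrict_setLIntegral_Ico_inv_le hS a)]
  exact congrArg ENNReal.toReal
    (setLIntegral_measure_Ioc_mul_eq_setLIntegral_Ico hS.measurable.inv ha t)

end InverseSurvival

section CompetingRisks

variable {Ω : Type*} [MeasurableSpace Ω] {P : Measure Ω} {T Tt : Ω → ℝ} {D Dt : Ω → ℕ}

theorem measure_lt_le_measure_lt_of_ae_le (hle : ∀ᵐ ω ∂P, Tt ω ≤ T ω) {s t : ℝ} (hst : s ≤ t) :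
    P {ω | t < Tt ω} ≤ P {ω | s < T ω} :=
  measure_mono_ae <| hle.mono fun _ hω ht => hst.trans_lt (ht.trans_le hω)

theorem map_restrict_singleton_eq_zero {X : Ω → ℝ} (hX : Measurable X) (E : Set Ω) {a : ℝ}
    (h : ∀ᵐ ω ∂P, a < X ω) : Measure.map X (P.restrict E) {a} = 0 := by
  rw [Measure.map_apply hX (measurableSet_singleton a), measure_eq_zero_iff_ae_notMem]
  exact (ae_restrict_of_ae h).mono fun _ hω => hω.ne'

theorem measure_censored_add_map_restrict_Ioc (hT : Measurable T) (hTt : Measurable Tt)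
    (hDt : Measurable Dt) (hpos : ∀ᵐ ω ∂P, 0 < Tt ω ∧ Tt ω ≤ T ω)
    (hDD : ∀ᵐ ω ∂P, Dt ω = if Tt ω = T ω then D ω else 0) {j : ℕ} (hj : j ≠ 0) (t : ℝ) :
    P {ω | T ω ≤ t ∧ D ω = j ∧ Tt ω ∈ Ioc 0 t ∧ Dt ω = 0}
        + Measure.map Tt (P.restrict {ω | Dt ω = j}) (Ioc 0 t)
      = Measure.map T (P.restrict {ω | D ω = j}) (Ioc 0 t) := by
  have hobserved : MeasurableSet (Tt ⁻¹' Ioc 0 t ∩ {ω | Dt ω = j}) :=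
    (hTt measurableSet_Ioc).inter (hDt (measurableSet_singleton j))
  have hdisj : Disjoint {ω | T ω ≤ t ∧ D ω = j ∧ Tt ω ∈ Ioc 0 t ∧ Dt ω = 0}
      (Tt ⁻¹' Ioc 0 t ∩ {ω | Dt ω = j}) :=
    disjoint_left.2 fun _ h1 h2 => hj (h2.2.symm.trans h1.2.2.2)
  rw [Measure.map_apply hTt measurableSet_Ioc, Measure.restrict_apply (hTt measurableSet_Ioc),
    Measure.map_apply hT measurableSet_Ioc, Measure.restrict_apply (hT measurableSet_Ioc),
    ← measure_union hdisj hobserved]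
  refine measure_congr (Filter.eventuallyEq_set.2 ?_)
  filter_upwards [hpos, hDD] with ω hω hDDω
  simp only [mem_union, mem_inter_iff, mem_ofPred_eq, mem_preimage, mem_Ioc]
  split_ifs at hDDω <;> grind

end CompetingRisks

theorem cond_fixed_vs_constant_sum_general
    {Ω : Type*} [m0 : MeasurableSpace Ω] (P : Measure Ω) [IsProbabilityMeasure P]
    (T Tt : Ω → ℝ) (D Dt : Ω → ℕ)
    (hT : Measurable T) (hTt : Measurable Tt)
    (hDt : Measurable Dt)
    (hpos : ∀ᵐ ω ∂P, 0 < Tt ω ∧ Tt ω ≤ T ω)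
    (hDD : ∀ᵐ ω ∂P, Dt ω = if Tt ω = T ω then D ω else 0)
    (μ μt : ℕ → Measure ℝ)
    (hμ : ∀ j, μ j = Measure.map T (P.restrict {ω | D ω = j}))
    (hμt : ∀ j, μt j = Measure.map Tt (P.restrict {ω | Dt ω = j}))
    (𝒥 : Set ℝ) (h𝒥 : 𝒥 = {t | 0 ≤ t ∧ 0 < P {ω | t < Tt ω}})
    -- fixed t ∈ 𝒥 and j ∈ {1,…,d}
    (t : ℝ) (ht : t ∈ 𝒥) (j : ℕ) (hj1 : 1 ≤ j)
    -- the density a_j of μ̃_j with respect to μ_j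
    (a : ℝ → ℝ) (ha_meas : Measurable a) (ha_range : ∀ s, 0 ≤ a s ∧ a s ≤ 1)
    (ha : ∀ A : Set ℝ, MeasurableSet A →
      μt j A = ∫⁻ s in A, ENNReal.ofReal (a s) ∂(μ j))
    -- g(s) = P(T ≤ t, D = j | T̃ = s, D̃ = 0), the density w.r.t. μ̃₀
    (g : ℝ → ℝ) (hg_meas : Measurable g) (hg_range : ∀ s, 0 ≤ g s ∧ g s ≤ 1)
    (hg : ∀ A : Set ℝ, MeasurableSet A →
      P {ω | T ω ≤ t ∧ D ω = j ∧ Tt ω ∈ A ∧ Dt ω = 0}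
        = ∫⁻ s in A, ENNReal.ofReal (g s) ∂(μt 0))
    -- B(s) = ∫_{[0,s)} S(u)⁻¹ μ̃₀(du)
    (B : ℝ → ℝ≥0∞)
    (hB : ∀ s, B s = ∫⁻ u in Ico 0 s, (P {ω | u < T ω})⁻¹ ∂(μt 0)) :
    ∫ s in Ioc (0:ℝ) t, ((μ j (Ioc s t)).toReal / (P {ω | s < T ω}).toReal - g s) ∂(μt 0)
      = ∫ s in Ioc (0:ℝ) t, (a s + (B s).toReal - 1) ∂(μ j) := by
  subst h𝒥
  obtain ⟨-, hc⟩ := ht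
  have : IsFiniteMeasure (μ j) := hμ j ▸ Measure.isFiniteMeasure_map _ _
  have : ∀ k, IsFiniteMeasure (μt k) := fun k => hμt k ▸ Measure.isFiniteMeasure_map _ _
  have hS : Antitone fun s => P {ω | s < T ω} := fun _ _ h =>
    measure_mono fun _ hω => h.trans_lt hω
  have hSt : P {ω | t < T ω} ≠ 0 :=
    (hc.trans_le (measure_lt_le_measure_lt_of_ae_le (hpos.mono fun _ h => h.2) le_rfl)).ne'
  have hν0 : μt 0 {0} = 0 :=
    hμt 0 ▸ map_restrict_singleton_eq_zero hTt _ (hpos.mono fun _ h => h.1)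
  have hsum := measure_censored_add_map_restrict_Ioc hT hTt hDt hpos hDD
    (Nat.one_le_iff_ne_zero.1 hj1) t
  rw [← hμt, ← hμ] at hsum
  have hgint := integrable_of_forall_nonneg_le_one (μ := (μt 0).restrict (Ioc 0 t))
    hg_meas.aestronglyMeasurable hg_range
  have haint := integrable_of_forall_nonneg_le_one (μ := (μ j).restrict (Ioc 0 t))
    ha_meas.aestronglyMeasurable ha_range
  have hBint := integrable_toReal_setLIntegral_Ico_inv (ν := μt 0) (κ := μ j) hS hSt 0
  simp_rw [← toReal_div, hB]
  rw [integral_sub (integrable_toReal_measure_Ioc_div hS hSt 0) hgint,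
    integral_sub (f := fun s => a s + _) (haint.add hBint) (integrable_const 1),
    integral_add haint hBint,
    setIntegral_toReal_measure_Ioc_div hS hSt hν0,
    integral_eq_lintegral_of_nonneg_ae (ae_of_all _ fun s => (hg_range s).1)
      hg_meas.aestronglyMeasurable, ← hg _ measurableSet_Ioc,
    integral_eq_lintegral_of_nonneg_ae (ae_of_all _ fun s => (ha_range s).1)
      ha_meas.aestronglyMeasurable, ← ha _ measurableSet_Ioc,
    setIntegral_const, smul_eq_mul, mul_one, measureReal_def, ← hsum,
    toReal_add (measure_ne_top _ _) (measure_ne_top _ _)]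
  ring

/-- Appendix identity (eq. (cond_fixed_vs_constant_sum)):
`∫_{(0,t]} (F_j(t|s) − g(s)) μ̃₀(ds) = ∫_{(0,t]} (a_j(s) + B(s) − 1) μ_j(ds)`
for fixed `t ∈ 𝒥` and `j ∈ {1,…,d}`. -/
theorem cond_fixed_vs_constant_sum
    {Ω : Type*} [m0 : MeasurableSpace Ω] (P : Measure Ω) [IsProbabilityMeasure P]
    (d : ℕ) (hd : 1 ≤ d)
    (T Tt : Ω → ℝ) (D Dt : Ω → ℕ)
    (hT : Measurable T) (hTt : Measurable Tt)
    (hD : Measurable D) (hDt : Measurable Dt)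
    (hpos : ∀ᵐ ω ∂P, 0 < Tt ω ∧ Tt ω ≤ T ω)
    (hDrange : ∀ ω, 1 ≤ D ω ∧ D ω ≤ d)
    (hDtrange : ∀ ω, Dt ω ≤ d)
    (hDD : ∀ᵐ ω ∂P, Dt ω = if Tt ω = T ω then D ω else 0)
    (μ μt : ℕ → Measure ℝ)
    (hμ : ∀ j, μ j = Measure.map T (P.restrict {ω | D ω = j}))
    (hμt : ∀ j, μt j = Measure.map Tt (P.restrict {ω | Dt ω = j}))
    (𝒥 : Set ℝ) (h𝒥 : 𝒥 = {t | 0 ≤ t ∧ 0 < P {ω | t < Tt ω}})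
    -- fixed t ∈ 𝒥 and j ∈ {1,…,d}
    (t : ℝ) (ht : t ∈ 𝒥) (j : ℕ) (hj1 : 1 ≤ j) (hjd : j ≤ d)
    -- the density a_j of μ̃_j with respect to μ_j
    (a : ℝ → ℝ) (ha_meas : Measurable a) (ha_range : ∀ s, 0 ≤ a s ∧ a s ≤ 1)
    (ha : ∀ A : Set ℝ, MeasurableSet A →
      μt j A = ∫⁻ s in A, ENNReal.ofReal (a s) ∂(μ j))
    -- g(s) = P(T ≤ t, D = j | T̃ = s, D̃ = 0), the density w.r.t. μ̃₀
    (g : ℝ → ℝ) (hg_meas : Measurable g) (hg_range : ∀ s, 0 ≤ g s ∧ g s ≤ 1)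
    (hg : ∀ A : Set ℝ, MeasurableSet A →
      P {ω | T ω ≤ t ∧ D ω = j ∧ Tt ω ∈ A ∧ Dt ω = 0}
        = ∫⁻ s in A, ENNReal.ofReal (g s) ∂(μt 0))
    -- B(s) = ∫_{[0,s)} S(u)⁻¹ μ̃₀(du)
    (B : ℝ → ℝ≥0∞)
    (hB : ∀ s, B s = ∫⁻ u in Ico 0 s, (P {ω | u < T ω})⁻¹ ∂(μt 0)) :
    ∫ s in Ioc (0:ℝ) t, ((μ j (Ioc s t)).toReal / (P {ω | s < T ω}).toReal - g s) ∂(μt 0)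
      = ∫ s in Ioc (0:ℝ) t, (a s + (B s).toReal - 1) ∂(μ j) :=
  cond_fixed_vs_constant_sum_general (m0 := m0) P T Tt D Dt hT hTt hDt hpos hDD μ μt hμ hμt 𝒥 h𝒥 t
    ht j hj1 a ha_meas ha_range ha g hg_meas hg_range hg B hB
end
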